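/- arXiv:math/0312382 — 5 statements merged into one kernel-verified Lean document; each statement's English description precedes it below -/
import Mathlib

section
/- For every x ∈ K there exist a ∈ O_K and b ∈ O_K \ {0} such that x^h = a/b and the ideal of O_K generated by a and b equals O_K; that is, every element of K admits a weak numerator and a weak denominator. -/
open NumberField

lemma pow_classNumber_isPrincipal {K : Type*} [Field K] [NumberField K]
    (A : Ideal (𝓞 K)) (hA : A ≠ 0) : (A ^ classNumber K).IsPrincipal := by
  have hA' : A ∈ nonZeroDivisors (Ideal (𝓞 K)) := mem_nonZeroDivisors_of_ne_zero hA
  have hpow : A ^ classNumber K ∈ nonZeroDivisors (Ideal (𝓞 K)) := pow_mem hA' _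
  have heq : (⟨A, hA'⟩ : nonZeroDivisors (Ideal (𝓞 K))) ^ classNumber K
      = ⟨A ^ classNumber K, hpow⟩ := by
    ext; simp
  rw [← ClassGroup.mk0_eq_one_iff hpow, ← heq, map_pow]
  exact pow_card_eq_one

/-- **Existence of weak numerators and weak denominators.**
For every `x ∈ K` there exist `a ∈ 𝓞 K` and `b ∈ 𝓞 K \ {0}` such that
`x ^ h = a / b` (where `h` is the class number of `K`) and the ideal of `𝓞 K`
generated by `a` and `b` is all of `𝓞 K`. -/
theorem weak_numerator_denominator_exists (K : Type*) [Field K] [NumberField K] (x : K) :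
    ∃ a b : 𝓞 K, b ≠ 0 ∧ x ^ classNumber K = (a : K) / (b : K) ∧
      Ideal.span {a, b} = (⊤ : Ideal (𝓞 K)) := by
  rcases eq_or_ne x 0 with rfl | hx
  · refine ⟨0, 1, one_ne_zero, ?_, ?_⟩
    · have h1 : classNumber K ≠ 0 := Fintype.card_ne_zero
      simp [zero_pow h1]
    · exact Ideal.eq_top_iff_one _ |>.mpr (Ideal.subset_span (by simp))
  · obtain ⟨n, d, hd, hxnd⟩ := IsFractionRing.div_surjective (A := 𝓞 K) x
    have hd0 : d ≠ 0 := nonZeroDivisors.ne_zero hd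
    have hn0 : n ≠ 0 := by
      rintro rfl
      simp at hxnd
      exact hx hxnd.symm
    set h := classNumber K with hh
    set N : Ideal (𝓞 K) := Ideal.span {n} with hN
    set D : Ideal (𝓞 K) := Ideal.span {d} with hD
    have hNne : N ≠ 0 := by simpa [hN, Ideal.span_singleton_eq_bot] using hn0
    have hDne : D ≠ 0 := by simpa [hD, Ideal.span_singleton_eq_bot] using hd0
    set G : Ideal (𝓞 K) := gcd N D with hG
    have hGdN : G ∣ N := gcd_dvd_left N D
    have hGdD : G ∣ D := gcd_dvd_right N D
    have hGne : G ≠ 0 := fun hGz => hNne (zero_dvd_iff.mp (hGz ▸ hGdN))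
    obtain ⟨A, hA⟩ := hGdN
    obtain ⟨B, hB⟩ := hGdD
    have hAne : A ≠ 0 := fun hz => hNne (by simp [hA, hz])
    have hBne : B ≠ 0 := fun hz => hDne (by simp [hB, hz])
    -- A and B are coprime
    have hcop : IsCoprime A B := by
      have hGG : G * gcd A B = G := by
        conv_rhs => rw [hG, hA, hB, gcd_mul_left]
        rw [normalize_eq]
      have hAB : gcd A B = 1 :=
        mul_left_cancel₀ hGne (hGG.trans (mul_one G).symm)
      exact (Ideal.isCoprime_iff_gcd).mpr hAB
    obtain ⟨a', ha'⟩ := pow_classNumber_isPrincipal A hAne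
    obtain ⟨b', hb'⟩ := pow_classNumber_isPrincipal B hBne
    have ha'span : A ^ h = Ideal.span {a'} := by simpa [Ideal.submodule_span_eq] using ha'
    have hb'span : B ^ h = Ideal.span {b'} := by simpa [Ideal.submodule_span_eq] using hb'
    have ha'0 : a' ≠ 0 := by
      rintro rfl
      apply pow_ne_zero h hAne
      rw [ha'span]
      simp
    have hb'0 : b' ≠ 0 := by
      rintro rfl
      apply pow_ne_zero h hBne
      rw [hb'span]
      simp
    -- key ideal equality
    have hideal : Ideal.span ({n ^ h * b'} : Set (𝓞 K)) = Ideal.span {d ^ h * a'} := by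
      rw [← Ideal.span_singleton_mul_span_singleton, ← Ideal.span_singleton_mul_span_singleton,
        ← Ideal.span_singleton_pow, ← Ideal.span_singleton_pow, ← hN, ← hD, ← ha'span, ← hb'span,
        hA, hB, mul_pow, mul_pow]
      ring
    obtain ⟨u, hu⟩ := (Ideal.span_singleton_eq_span_singleton.mp hideal)
    -- n^h * b' * u = d^h * a'
    refine ⟨a', b' * u, ?_, ?_, ?_⟩
    · exact mul_ne_zero hb'0 u.ne_zero
    · have hk := congrArg (algebraMap (𝓞 K) K) hu
      push_cast at hk
      have hdK : (d : K) ≠ 0 := by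
        simpa using (RingOfIntegers.coe_ne_zero_iff).mpr hd0
      have hbuK : (((b' * u : 𝓞 K)) : K) ≠ 0 := by
        simpa using (RingOfIntegers.coe_ne_zero_iff).mpr (mul_ne_zero hb'0 u.ne_zero)
      rw [← hxnd, div_pow, div_eq_div_iff (pow_ne_zero h hdK) hbuK]
      push_cast
      linear_combination hk
    · have hspan : Ideal.span ({b' * (u : 𝓞 K)} : Set (𝓞 K)) = Ideal.span {b'} :=
        Ideal.span_singleton_eq_span_singleton.mpr ⟨u⁻¹, by simp [mul_assoc]⟩
      rw [Ideal.span_insert, hspan, ← ha'span, ← hb'span]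
      exact (Ideal.isCoprime_iff_sup_eq).mp (hcop.pow)
end

section
/- Let x ∈ K be nonzero and let (a, b) be a pair of weak numerator and weak denominator of x. Then for every nonzero prime ideal p of O_K, with v_p the associated normalized additive valuation on K: v_p(x) > 0 if and only if v_p(a) > 0, and in that case v_p(a) = h·v_p(x); and v_p(x) < 0 if and only if v_p(b) > 0, and in that case v_p(b) = −h·v_p(x). -/
open NumberField IsDedekindDomain
open scoped Classical

/-- A pair `(a, b)` is a pair of weak numerator and weak denominator of `x ∈ K` if
`b ≠ 0`, `x ^ h = a / b` (`h` the class number of `K`), and the ideal generated by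
`a` and `b` is all of `𝓞 K`. -/
def IsWeakPair (K : Type*) [Field K] [NumberField K] (x : K) (a b : 𝓞 K) : Prop :=
  b ≠ 0 ∧ x ^ classNumber K = (a : K) / (b : K) ∧ Ideal.span {a, b} = (⊤ : Ideal (𝓞 K))

/-- The normalized `ℤ`-valued additive valuation on `K` associated to a nonzero prime
ideal `v` of `𝓞 K` (i.e. a height-one prime), with the convention `addVal v 0 = 0`. -/
noncomputable def addVal {K : Type*} [Field K] [NumberField K]
    (v : HeightOneSpectrum (𝓞 K)) (x : K) : ℤ :=
  if hx : x = 0 then 0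
  else - Multiplicative.toAdd (WithZero.unzero ((v.valuation (K := K)).ne_zero_iff.mpr hx))

section AuxLemmas

variable {K : Type*} [Field K] [NumberField K] (v : HeightOneSpectrum (𝓞 K))

lemma addVal_mul {x y : K} (hx : x ≠ 0) (hy : y ≠ 0) :
    addVal v (x * y) = addVal v x + addVal v y := by
  have hxy : x * y ≠ 0 := mul_ne_zero hx hy
  simp only [addVal, dif_neg hx, dif_neg hy, dif_neg hxy]
  rw [show WithZero.unzero ((v.valuation (K := K)).ne_zero_iff.mpr hxy)
      = WithZero.unzero ((v.valuation (K := K)).ne_zero_iff.mpr hx) *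
        WithZero.unzero ((v.valuation (K := K)).ne_zero_iff.mpr hy) from ?_]
  · rw [toAdd_mul]; ring
  · rw [← WithZero.coe_inj]
    simp [WithZero.coe_unzero, map_mul]

lemma addVal_one : addVal v (1 : K) = 0 := by
  simp only [addVal, dif_neg (one_ne_zero : (1:K) ≠ 0)]
  have key : ∀ u : Multiplicative ℤ,
      (u : WithZero (Multiplicative ℤ)) = (v.valuation (K := K)) 1 →
      - Multiplicative.toAdd u = 0 := by
    intro u hu
    rw [map_one] at hu
    have : u = 1 := by exact_mod_cast hu
    simp [this]
  exact key _ (WithZero.coe_unzero _)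

lemma addVal_pow (n : ℕ) {x : K} (hx : x ≠ 0) :
    addVal v (x ^ n) = n * addVal v x := by
  induction n with
  | zero => simpa using addVal_one v
  | succ n ih =>
      rw [pow_succ, addVal_mul v (pow_ne_zero n hx) hx, ih]
      push_cast; ring

lemma addVal_pos_iff_val_lt_one {y : K} (hy : y ≠ 0) :
    0 < addVal v y ↔ (v.valuation (K := K)) y < 1 := by
  simp only [addVal, dif_neg hy]
  have key : ∀ u : Multiplicative ℤ,
      (u : WithZero (Multiplicative ℤ)) = (v.valuation (K := K)) y →
      (0 < - Multiplicative.toAdd u ↔ (v.valuation (K := K)) y < 1) := by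
    intro u hu
    rw [← hu, ← WithZero.coe_one, WithZero.coe_lt_coe]
    conv_rhs => rw [← Multiplicative.toAdd_lt]
    rw [toAdd_one]
    omega
  exact key _ (WithZero.coe_unzero _)

lemma addVal_nonneg {r : 𝓞 K} (hr : r ≠ 0) : 0 ≤ addVal v (r : K) := by
  have hr' : (r : K) ≠ 0 := by exact_mod_cast hr
  have h1 : (v.valuation (K := K)) (r : K) ≤ 1 := v.valuation_le_one r
  rcases lt_or_eq_of_le h1 with h | h
  · exact le_of_lt ((addVal_pos_iff_val_lt_one v hr').mpr h)
  · simp only [addVal, dif_neg hr']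
    have key : ∀ u : Multiplicative ℤ,
        (u : WithZero (Multiplicative ℤ)) = (v.valuation (K := K)) (r : K) →
        (0 : ℤ) ≤ - Multiplicative.toAdd u := by
      intro u hu
      rw [h] at hu
      have : u = 1 := by exact_mod_cast hu
      simp [this]
    exact key _ (WithZero.coe_unzero _)

lemma addVal_pos_iff {r : 𝓞 K} (hr : r ≠ 0) :
    0 < addVal v (r : K) ↔ r ∈ v.asIdeal := by
  have hr' : (r : K) ≠ 0 := by exact_mod_cast hr
  rw [addVal_pos_iff_val_lt_one v hr',
    show ((r : K)) = algebraMap (𝓞 K) K r from rfl,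
    v.valuation_lt_one_iff_dvd r, Ideal.dvd_span_singleton]

end AuxLemmas

/-- For `x ∈ K` nonzero with weak numerator `a` and weak denominator `b`, and any nonzero
prime `p` of `𝓞 K` with normalized additive valuation `v_p`:
`v_p(x) > 0 ↔ v_p(a) > 0` (and then `v_p(a) = h·v_p(x)`), and
`v_p(x) < 0 ↔ v_p(b) > 0` (and then `v_p(b) = −h·v_p(x)`). -/
theorem addVal_weak_numerator_denominator (K : Type*) [Field K] [NumberField K]
    (x : K) (hx : x ≠ 0) (a b : 𝓞 K) (h : IsWeakPair K x a b)
    (v : HeightOneSpectrum (𝓞 K)) :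
    ((0 < addVal v x ↔ 0 < addVal v (a : K)) ∧
      (0 < addVal v x → addVal v (a : K) = (classNumber K : ℤ) * addVal v x)) ∧
    ((addVal v x < 0 ↔ 0 < addVal v (b : K)) ∧
      (addVal v x < 0 → addVal v (b : K) = -((classNumber K : ℤ) * addVal v x))) := by
  obtain ⟨hb, heq, hspan⟩ := h
  have hb' : (b : K) ≠ 0 := by exact_mod_cast hb
  have hxh : x ^ classNumber K ≠ 0 := pow_ne_zero _ hx
  have ha' : (a : K) ≠ 0 := by
    intro hc; rw [heq, hc, zero_div] at hxh; exact hxh rfl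
  have ha : a ≠ 0 := by exact_mod_cast ha'
  have hd : (a : K) / (b : K) ≠ 0 := heq ▸ hxh
  -- valuation equation
  have hsplit : addVal v (a : K) = addVal v ((a : K) / (b : K)) + addVal v (b : K) := by
    rw [← addVal_mul v hd hb', div_mul_cancel₀ _ hb']
  have key : (classNumber K : ℤ) * addVal v x = addVal v (a : K) - addVal v (b : K) := by
    rw [← addVal_pow v _ hx, heq, hsplit]; ring
  -- coprimality
  have hnotboth : ¬(a ∈ v.asIdeal ∧ b ∈ v.asIdeal) := by
    rintro ⟨h1, h2⟩
    have hle : Ideal.span ({a, b} : Set (𝓞 K)) ≤ v.asIdeal := by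
      rw [Ideal.span_le]
      intro y hy
      rcases hy with hy | hy
      · exact hy ▸ h1
      · exact (Set.mem_singleton_iff.mp hy) ▸ h2
    rw [hspan] at hle
    exact v.isPrime.ne_top (top_le_iff.mp hle)
  have hApos : 0 < addVal v (a : K) ↔ a ∈ v.asIdeal := addVal_pos_iff v ha
  have hBpos : 0 < addVal v (b : K) ↔ b ∈ v.asIdeal := addVal_pos_iff v hb
  have hA : 0 ≤ addVal v (a : K) := addVal_nonneg v ha
  have hB : 0 ≤ addVal v (b : K) := addVal_nonneg v hb
  have hnot : ¬(0 < addVal v (a : K) ∧ 0 < addVal v (b : K)) := by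
    rw [hApos, hBpos]; exact hnotboth
  have hcl : 0 < (classNumber K : ℤ) := by
    exact_mod_cast Fintype.card_pos (α := ClassGroup (𝓞 K))
  set n := addVal v x with hn
  set m := (classNumber K : ℤ) * n with hm
  have h1 : 0 < n → 0 < m := fun hh => mul_pos hcl hh
  have h2 : n < 0 → m < 0 := fun hh => mul_neg_of_pos_of_neg hcl hh
  have h3 : n = 0 → m = 0 := fun hh => by rw [hm, hh, mul_zero]
  clear_value m
  omega
end

section
/- If u ∈ ℤ \ {0} and ξ ∈ O_K satisfy the divisibility condition that 2^{n!+1} · ∏_{i=0}^{n!−1} (ξ + i)^{n!} divides u in O_K, then for every ring embedding σ : K → ℂ one has |σ(ξ)| ≤ (1/2) · |N(u)|^{1/n!}. -/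
open NumberField Nat
set_option maxHeartbeats 2000000

private lemma abs_add_nat_lb₁ (w : ℂ) (i : ℕ) : ‖w‖ - i ≤ ‖w + i‖ := by
  have h := norm_add_le (w + i) (-(i : ℂ))
  have h2 : ‖-(i : ℂ)‖ = i := by
    rw [show (-(i:ℂ)) = (((-i : ℝ)) : ℂ) by push_cast; ring, Complex.norm_real, Real.norm_eq_abs,
      abs_neg, abs_of_nonneg (Nat.cast_nonneg i)]
  simp only [add_neg_cancel_right] at h
  rw [h2] at h
  linarith

private lemma abs_add_nat_lb₂ (w : ℂ) (i : ℕ) : (i : ℝ) - ‖w‖ ≤ ‖w + i‖ := by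
  have h := norm_add_le (w + i) (-w)
  simp only [add_neg_cancel_left, add_neg_cancel_comm] at h
  have h2 : ‖-w‖ = ‖w‖ := by
    rw [show -w = ((-1 : ℝ) : ℂ) * w by push_cast; ring, norm_mul, Complex.norm_real, Real.norm_eq_abs]
    norm_num
  rw [h2, Complex.norm_natCast] at h
  linarith

private lemma abs_add_nat_lb₃ (w : ℂ) (i : ℕ) : |w.re + i| ≤ ‖w + i‖ := by
  have h := Complex.abs_re_le_norm (w + i)
  simpa [Complex.add_re, Complex.natCast_re] using h

private lemma abs_add_nat_lb₄ (w : ℂ) (i : ℕ) : |w.im| ≤ ‖w + i‖ := by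
  have h := Complex.abs_im_le_norm (w + i)
  simpa [Complex.add_im, Complex.natCast_im] using h

private lemma abs_add_nat_lb₅ (w : ℂ) (i : ℕ) (hre : 0 ≤ w.re) :
    ‖w‖ ≤ ‖w + i‖ := by
  have h1 : (‖w‖)^2 ≤ (‖w + i‖)^2 := by
    rw [Complex.sq_norm, Complex.sq_norm, Complex.normSq_apply, Complex.normSq_apply]
    simp only [Complex.add_re, Complex.add_im, Complex.natCast_re, Complex.natCast_im, add_zero]
    nlinarith [Nat.cast_nonneg (α := ℝ) i]
  exact le_of_pow_le_pow_left₀ two_ne_zero (norm_nonneg _) h1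

private lemma exists_good_index {ι : Type*} (T : Finset ι) (w : ι → ℂ) (S : Finset ℕ)
    (h : T.card < S.card) :
    ∃ i ∈ S, ∀ k ∈ T, (1/2 : ℝ) ≤ ‖w k + (i : ℂ)‖ := by
  classical
  by_contra hcon
  push_neg at hcon
  obtain ⟨i₀, hi₀⟩ : S.Nonempty := Finset.card_pos.mp (lt_of_le_of_lt (Nat.zero_le _) h)
  obtain ⟨k₀, hk₀, -⟩ := hcon i₀ hi₀
  set F : ℕ → ι := fun i =>
    if h' : ∃ k ∈ T, ‖w k + (i:ℂ)‖ < 1/2 then h'.choose else k₀ with hF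
  have hFmem : ∀ i ∈ S, F i ∈ T := by
    intro i hi
    obtain ⟨k, hk, hlt⟩ := hcon i hi
    rw [hF]
    simp only [dif_pos (⟨k, hk, hlt⟩ : ∃ k ∈ T, ‖w k + (i:ℂ)‖ < 1/2)]
    exact (Exists.choose_spec (⟨k, hk, hlt⟩ : ∃ k ∈ T, ‖w k + (i:ℂ)‖ < 1/2)).1
  have hFlt : ∀ i ∈ S, ‖w (F i) + (i:ℂ)‖ < 1/2 := by
    intro i hi
    obtain ⟨k, hk, hlt⟩ := hcon i hi
    rw [hF]
    simp only [dif_pos (⟨k, hk, hlt⟩ : ∃ k ∈ T, ‖w k + (i:ℂ)‖ < 1/2)]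
    exact (Exists.choose_spec (⟨k, hk, hlt⟩ : ∃ k ∈ T, ‖w k + (i:ℂ)‖ < 1/2)).2
  obtain ⟨i, hiS, j, hjS, hij, heq⟩ := Finset.exists_ne_map_eq_of_card_lt_of_maps_to h hFmem
  have h1 : (1:ℝ) ≤ |(i:ℝ) - (j:ℝ)| := by
    have hne : (i:ℤ) - (j:ℤ) ≠ 0 := by
      intro hc
      apply hij
      omega
    have h2 := Int.one_le_abs hne
    have h3 : ((1:ℤ):ℝ) ≤ ((|(i:ℤ) - (j:ℤ)| : ℤ) : ℝ) := Int.cast_le.mpr h2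
    push_cast at h3
    convert h3 using 2
  have h4 : ‖(i:ℂ) - (j:ℂ)‖ < 1 := by
    have ha := hFlt i hiS
    have hb := hFlt j hjS
    rw [heq] at ha
    have he : (i:ℂ) - (j:ℂ) = (w (F j) + (i:ℂ)) - (w (F j) + (j:ℂ)) := by ring
    rw [he]
    calc ‖(w (F j) + (i:ℂ)) - (w (F j) + (j:ℂ))‖
        ≤ ‖w (F j) + (i:ℂ)‖ + ‖w (F j) + (j:ℂ)‖ := by
          have h6 := norm_add_le (w (F j) + (i:ℂ)) (-(w (F j) + (j:ℂ)))
          rw [show (w (F j) + (i:ℂ)) + -(w (F j) + (j:ℂ)) = (w (F j) + (i:ℂ)) - (w (F j) + (j:ℂ)) by ring] at h6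
          refine h6.trans ?_
          have hneg : ‖-(w (F j) + (j:ℂ))‖ = ‖w (F j) + (j:ℂ)‖ := by
            rw [show -(w (F j) + (j:ℂ)) = ((-1 : ℝ) : ℂ) * (w (F j) + (j:ℂ)) by push_cast; ring,
              norm_mul, Complex.norm_real, Real.norm_eq_abs]
            norm_num
          rw [hneg]
      _ < 1 := by linarith
  have h5 : ‖(i:ℂ) - (j:ℂ)‖ = |(i:ℝ) - (j:ℝ)| := by
    rw [show (i:ℂ) - (j:ℂ) = (((i:ℝ) - (j:ℝ) : ℝ) : ℂ) by push_cast; ring, Complex.norm_real, Real.norm_eq_abs]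
  rw [h5] at h4
  linarith

private lemma key_lemma {ι : Type*} [Fintype ι] {m M : ℕ}
    (hMfac : M = (m+1)!)
    (hcard : Fintype.card ι = m + 1) (z : ι → ℂ) (σ : ι)
    (hN1 : ∀ i : ℕ, i < M → (1:ℝ) ≤ ∏ k, ‖z k + (i : ℂ)‖) :
    ∃ i < M, (2 * ‖z σ‖) ^ M ≤
      2 ^ ((m+1) * (M + 1)) * (∏ k, ‖z k + (i : ℂ)‖) ^ M := by
  classical
  by_contra hcon
  push_neg at hcon
  have hM1 : 1 ≤ M := by rw [hMfac]; exact (m+1).factorial_pos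
  obtain ⟨N, hNdef⟩ : ∃ N : ℕ → ℝ, N = fun i : ℕ => ∏ k, ‖z k + (i:ℂ)‖ := ⟨_, rfl⟩
  obtain ⟨R, hRdef⟩ : ∃ R : ℝ, R = ‖z σ‖ := ⟨_, rfl⟩
  have hcon' : ∀ i, i < M → 2 ^ ((m+1) * (M+1)) * N i ^ M < (2*R)^M := by
    intro i hi
    simpa only [hNdef, hRdef] using hcon i hi
  have hN1' : ∀ i, i < M → (1:ℝ) ≤ N i := by
    intro i hi
    simpa only [hNdef] using hN1 i hi
  have hNnn : ∀ i, 0 ≤ N i := by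
    intro i
    rw [hNdef]
    exact Finset.prod_nonneg fun k _ => norm_nonneg _
  have hR0 : 0 ≤ R := by rw [hRdef]; exact norm_nonneg _
  have strong : ∀ i, i < M → 2^(m*M + (m+1)) * N i ^ M < R ^ M := by
    intro i hi
    have h := hcon' i hi
    have e : (m+1) * (M+1) = M + (m*M + (m+1)) := by ring
    rw [mul_pow, e, pow_add, mul_assoc] at h
    have h2 : (0:ℝ) < 2 ^ M := by positivity
    exact (mul_lt_mul_iff_right₀ h2).mp h
  have weak : ∀ i, i < M → 2^m * N i < R := by
    intro i hi
    have h := strong i hi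
    have h1 : ((2:ℝ)^m * N i)^M ≤ 2^(m*M + (m+1)) * N i ^ M := by
      rw [mul_pow, ← pow_mul]
      exact mul_le_mul_of_nonneg_right
        (pow_le_pow_right₀ (by norm_num) (Nat.le_add_right _ _)) (pow_nonneg (hNnn i) M)
    exact lt_of_pow_lt_pow_left₀ M hR0 (lt_of_le_of_lt h1 h)
  have hRM : (2:ℝ)^(m*M + (m+1)) < R^M := by
    have h0 := strong 0 (by omega)
    have h1 : (1:ℝ) ≤ N 0 ^ M := by
      calc (1:ℝ) = 1 ^ M := (one_pow M).symm
      _ ≤ N 0 ^ M := pow_le_pow_left₀ (by norm_num) (hN1' 0 (by omega)) M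
    nlinarith [pow_pos (show (0:ℝ) < 2 by norm_num) (m*M + (m+1))]
  have hR2m : (2:ℝ)^m < R := by
    apply lt_of_pow_lt_pow_left₀ M hR0
    calc ((2:ℝ)^m)^M = 2^(m*M) := by rw [← pow_mul]
      _ ≤ 2^(m*M+(m+1)) := pow_le_pow_right₀ one_le_two (Nat.le_add_right _ _)
      _ < R^M := hRM
  have hRpos : 0 < R := lt_of_le_of_lt (by positivity) hR2m
  rcases Nat.eq_zero_or_pos m with rfl | hm1
  · -- n = 1
    have huniv : (Finset.univ : Finset ι) = {σ} := by
      refine (Finset.eq_of_subset_of_card_le (Finset.singleton_subset_iff.mpr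
        (Finset.mem_univ σ)) ?_).symm
      rw [Finset.card_univ, hcard, Finset.card_singleton]
    have hN0R : N 0 = R := by
      rw [hNdef, hRdef]
      simp only [Nat.cast_zero, add_zero]
      rw [show (∏ k, ‖z k‖) = ∏ k ∈ Finset.univ, ‖z k‖ from rfl,
        huniv, Finset.prod_singleton]
    have h := weak 0 (by omega)
    rw [hN0R, pow_zero, one_mul] at h
    exact absurd h (lt_irrefl R)
  -- now m ≥ 1
  obtain ⟨p, hpdef⟩ : ∃ p : ℝ, p = ∏ k ∈ Finset.univ.erase σ, ‖z k‖ := ⟨_, rfl⟩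
  have hppos : 0 ≤ p := by
    rw [hpdef]; exact Finset.prod_nonneg fun k _ => norm_nonneg _
  have hN0 : N 0 = R * p := by
    rw [hNdef, hRdef, hpdef]
    simp only [Nat.cast_zero, add_zero]
    exact (Finset.mul_prod_erase Finset.univ _ (Finset.mem_univ σ)).symm
  have hp : 2^m * p < 1 := by
    have h := weak 0 (by omega)
    rw [hN0] at h
    nlinarith
  obtain ⟨k₀, hk₀mem, hk₀⟩ : ∃ k ∈ Finset.univ.erase σ, ‖z k‖ < 1/2 := by
    by_contra hno
    push_neg at hno
    have hcard' : (Finset.univ.erase σ).card = m := by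
      rw [Finset.card_erase_of_mem (Finset.mem_univ σ), Finset.card_univ, hcard]
      omega
    have h1 : ((1:ℝ)/2)^m ≤ p := by
      rw [hpdef, ← hcard', ← Finset.prod_const]
      exact Finset.prod_le_prod (fun k _ => by norm_num) hno
    have h2 : (1:ℝ) = 2^m * (1/2)^m := by
      rw [← mul_pow]; norm_num
    nlinarith [pow_pos (show (0:ℝ) < 2 by norm_num) m]
  obtain ⟨T, hTdef⟩ : ∃ T : Finset ι, T = (Finset.univ.erase σ).erase k₀ := ⟨_, rfl⟩
  have hTcard : T.card = m - 1 := by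
    rw [hTdef, Finset.card_erase_of_mem hk₀mem, Finset.card_erase_of_mem (Finset.mem_univ σ),
      Finset.card_univ, hcard]
    omega
  have hsplit : ∀ i : ℕ, N i = ‖z σ + (i:ℂ)‖ *
      (‖z k₀ + (i:ℂ)‖ * ∏ k ∈ T, ‖z k + (i:ℂ)‖) := by
    intro i
    rw [hNdef, hTdef]
    show (∏ k, ‖z k + (i:ℂ)‖) = _
    rw [show (∏ k, ‖z k + (i:ℂ)‖) =
        ∏ k ∈ Finset.univ, ‖z k + (i:ℂ)‖ from rfl,
      ← Finset.mul_prod_erase Finset.univ _ (Finset.mem_univ σ),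
      ← Finset.mul_prod_erase _ _ hk₀mem]
  have hk₀i : ∀ i : ℕ, (i:ℝ) - 1/2 ≤ ‖z k₀ + i‖ := by
    intro i
    have := abs_add_nat_lb₂ (z k₀) i
    linarith
  have hzσlb : ∀ i : ℕ, R - i ≤ ‖z σ + i‖ := by
    intro i; rw [hRdef]; exact abs_add_nat_lb₁ (z σ) i
  have final : ∀ i : ℕ, i < M → (∀ k ∈ T, (1/2:ℝ) ≤ ‖z k + (i:ℂ)‖) →
      R/2 ≤ ‖z σ + (i:ℂ)‖ * ((i:ℝ) - 1/2) → False := by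
    intro i hiM hgood hRi
    have hzσnn : (0:ℝ) ≤ ‖z σ + (i:ℂ)‖ := norm_nonneg _
    have h1 : ((1:ℝ)/2)^(m-1) ≤ ∏ k ∈ T, ‖z k + (i:ℂ)‖ := by
      rw [← hTcard, ← Finset.prod_const]
      exact Finset.prod_le_prod (fun k _ => by norm_num) hgood
    have h3 : R/2 * (1/2)^(m-1) ≤ N i := by
      rw [hsplit i]
      calc R/2 * (1/2)^(m-1)
          ≤ (‖z σ + (i:ℂ)‖ * ((i:ℝ)-1/2)) * (1/2)^(m-1) :=
            mul_le_mul_of_nonneg_right hRi (by positivity)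
        _ ≤ (‖z σ + (i:ℂ)‖ * ‖z k₀ + (i:ℂ)‖) * (1/2)^(m-1) :=
            mul_le_mul_of_nonneg_right
              (mul_le_mul_of_nonneg_left (hk₀i i) hzσnn) (by positivity)
        _ ≤ (‖z σ + (i:ℂ)‖ * ‖z k₀ + (i:ℂ)‖) *
              ∏ k ∈ T, ‖z k + (i:ℂ)‖ := by
            apply mul_le_mul_of_nonneg_left h1
            exact mul_nonneg hzσnn (norm_nonneg _)
        _ = _ := by ring
    have h4 := weak i hiM
    have h5 : (2:ℝ)^m * (R/2 * (1/2)^(m-1)) = R := by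
      have he : (2:ℝ)^m = 2 * 2^(m-1) := by
        nth_rewrite 1 [show m = (m-1)+1 by omega]
        rw [pow_succ]
        ring
      have hne : ((2:ℝ)^(m-1)) ≠ 0 := by positivity
      rw [he, one_div, inv_pow]
      field_simp
    have h6 := mul_le_mul_of_nonneg_left h3
      (le_of_lt (pow_pos (show (0:ℝ) < 2 by norm_num) m))
    rw [h5] at h6
    linarith
  rcases Nat.lt_or_ge m 3 with hm3 | hmge3
  · -- m = 1 or m = 2
    interval_cases m
    · -- m = 1, M = 2
      have hM2 : M = 2 := by rw [hMfac]; rfl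
      subst hM2
      have hs1 := strong 1 (by norm_num)
      have hs0 := strong 0 (by norm_num)
      norm_num at hs1 hs0
      have hR4 : 4 < R := by
        have h16 : ((4:ℝ))^2 < R^2 := by
          norm_num at hRM
          nlinarith [hRM]
        exact lt_of_pow_lt_pow_left₀ 2 hR0 h16
      have hRR : (0:ℝ) < R^2 := by positivity
      have h16 : 16 * p^2 < 1 := by
        rw [hN0, mul_pow] at hs0
        by_contra hc
        push_neg at hc
        have h2 : (0:ℝ) ≤ R^2 * (16*p^2 - 1) :=
          mul_nonneg (le_of_lt hRR) (by linarith)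
        nlinarith [hs0]
      have hp4 : p < 1/4 := by nlinarith [hppos]
      have hTe : T = ∅ := Finset.card_eq_zero.mp (by rw [hTcard])
      have hpk : p = ‖z k₀‖ := by
        have hcard1 : (Finset.univ.erase σ).card = 1 := by
          rw [Finset.card_erase_of_mem (Finset.mem_univ σ), Finset.card_univ, hcard]
        obtain ⟨a, ha⟩ := Finset.card_eq_one.mp hcard1
        have hk₀a : k₀ = a := by
          have := hk₀mem
          rw [ha, Finset.mem_singleton] at this
          exact this
        rw [hpdef, ha, Finset.prod_singleton, hk₀a]
      have hb1 : (3:ℝ)/4 ≤ ‖z k₀ + ((1:ℕ):ℂ)‖ := by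
        have h := abs_add_nat_lb₂ (z k₀) 1
        rw [← hpk] at h
        push_cast at h ⊢
        linarith
      have ha1 : R - 1 ≤ ‖z σ + ((1:ℕ):ℂ)‖ := by
        have := hzσlb 1
        push_cast at this ⊢
        linarith
      have hN1e : (3:ℝ)/4 * (R - 1) ≤ N 1 := by
        rw [hsplit 1, hTe, Finset.prod_empty, mul_one]
        calc (3:ℝ)/4 * (R-1) = (R-1) * (3/4) := by ring
          _ ≤ ‖z σ + ((1:ℕ):ℂ)‖ * ‖z k₀ + ((1:ℕ):ℂ)‖ :=
              mul_le_mul ha1 hb1 (by norm_num) (norm_nonneg _)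
      nlinarith [hs1, hN1e, hR4, hNnn 1,
        mul_le_mul hN1e hN1e (by nlinarith [hR4]) (hNnn 1)]
    · -- m = 2, M = 6
      have hM6 : M = 6 := by rw [hMfac]; rfl
      subst hM6
      have hR2 : 32 < R^2 := by
        have h1 : ((32:ℝ))^3 < (R^2)^3 := by
          have : ((R:ℝ)^2)^3 = R^6 := by ring
          rw [this]
          norm_num at hRM
          nlinarith [hRM]
        exact lt_of_pow_lt_pow_left₀ 3 (sq_nonneg R) h1
      have hR56 : 28/5 < R := by
        have h1 : ((28:ℝ)/5)^2 < R^2 := by nlinarith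
        exact lt_of_pow_lt_pow_left₀ 2 hR0 h1
      obtain ⟨i, hiS, hgood⟩ := exists_good_index T z (Finset.Icc 4 5)
        (by rw [hTcard, Nat.card_Icc]; omega)
      obtain ⟨hi1, hi2⟩ := Finset.mem_Icc.mp hiS
      have hiM : i < 6 := by omega
      have hc1 : (4:ℝ) ≤ i := by exact_mod_cast hi1
      have hc2 : (i:ℝ) ≤ 5 := by exact_mod_cast hi2
      have hA : R - 5 ≤ ‖z σ + (i:ℂ)‖ := le_trans (by linarith) (hzσlb i)
      have hB : (7:ℝ)/2 ≤ ‖z k₀ + (i:ℂ)‖ := le_trans (by linarith) (hk₀i i)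
      have hC : ((1:ℝ)/2) ≤ ∏ k ∈ T, ‖z k + (i:ℂ)‖ := by
        have h1 : ((1:ℝ)/2)^(2-1) ≤ ∏ k ∈ T, ‖z k + (i:ℂ)‖ := by
          rw [← hTcard, ← Finset.prod_const]
          exact Finset.prod_le_prod (fun k _ => by norm_num) hgood
        norm_num at h1
        exact h1
      have hR5 : (0:ℝ) ≤ R - 5 := by linarith
      have hN : (7:ℝ)/4 * (R-5) ≤ N i := by
        rw [hsplit i]
        calc (7:ℝ)/4 * (R-5) = (R-5) * ((7/2) * (1/2)) := by ring
          _ ≤ ‖z σ + (i:ℂ)‖ *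
              (‖z k₀ + (i:ℂ)‖ * ∏ k ∈ T, ‖z k + (i:ℂ)‖) := by
              apply mul_le_mul hA _ (by norm_num) (norm_nonneg _)
              exact mul_le_mul hB hC (by norm_num) (norm_nonneg _)
      have hs := strong i hiM
      norm_num at hs
      have h98 : R^2 ≤ 98*(R-5)^2 := by nlinarith [hR2, hR56]
      have hfin : R^6 ≤ 32768 * N i^6 := by
        calc R^6 = (R^2)^3 := by ring
          _ ≤ (98*(R-5)^2)^3 := pow_le_pow_left₀ (sq_nonneg R) h98 3
          _ = 32768 * ((7:ℝ)/4*(R-5))^6 := by ring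
          _ ≤ 32768 * (N i)^6 := by
              have h7 : ((7:ℝ)/4*(R-5))^6 ≤ N i^6 :=
                pow_le_pow_left₀ (by nlinarith [hR5]) hN 6
              linarith
      linarith
  · -- m ≥ 3
    have h6fac : 6 ≤ m ! := by
      calc 6 = 3! := by rfl
        _ ≤ m ! := Nat.factorial_le hmge3
    have hf4 : 4*(m+1) ≤ M := by
      rw [hMfac, Nat.factorial_succ]
      calc 4*(m+1) = (m+1)*4 := by ring
        _ ≤ (m+1)*(m !) := Nat.mul_le_mul_left _ (by omega)
    have hM24 : 24 ≤ M := by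
      rw [hMfac]
      calc 24 = 4 ! := by rfl
        _ ≤ (m+1)! := Nat.factorial_le (by omega)
    have hMr : (24:ℝ) ≤ (M:ℝ) := by exact_mod_cast hM24
    have hf4r : 4*((m:ℝ)+1) ≤ (M:ℝ) := by exact_mod_cast hf4
    have hm3r : (3:ℝ) ≤ (m:ℝ) := by exact_mod_cast hmge3
    have hcast : ∀ a b : ℕ, a ≤ b → (a:ℝ) ≤ (b:ℝ) := fun a b h => Nat.cast_le.mpr h
    -- the standard slot set bounds
    have hSstd : ∀ i : ℕ, M - m ≤ i → i ≤ M - 1 →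
        ((M:ℝ) - m ≤ (i:ℝ) ∧ (i:ℝ) ≤ (M:ℝ) - 1 ∧ 1 ≤ (i:ℝ) - 1/2) := by
      intro i h1 h2
      have hc1 : ((M - m : ℕ):ℝ) ≤ i := Nat.cast_le.mpr h1
      have hc2 : (i:ℝ) ≤ ((M - 1 : ℕ):ℝ) := Nat.cast_le.mpr h2
      rw [Nat.cast_sub (by omega)] at hc1
      rw [Nat.cast_sub (by omega)] at hc2
      push_cast at hc1 hc2
      refine ⟨hc1, hc2, by linarith⟩
    rcases le_or_gt (2*(M:ℝ)) R with hA | hRlt2M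
    · -- Case A : R ≥ 2M
      obtain ⟨i, hiS, hgood⟩ := exists_good_index T z (Finset.Icc (M-m) (M-1))
        (by rw [hTcard, Nat.card_Icc]; omega)
      obtain ⟨hi1, hi2⟩ := Finset.mem_Icc.mp hiS
      have hiM : i < M := by omega
      obtain ⟨hr1, hr2, hr3⟩ := hSstd i hi1 hi2
      refine final i hiM hgood ?_
      have h1 : R - (M:ℝ) + 1 ≤ ‖z σ + (i:ℂ)‖ := le_trans (by linarith) (hzσlb i)
      calc R/2 ≤ (R - (M:ℝ) + 1) * 1 := by linarith
        _ ≤ ‖z σ + (i:ℂ)‖ * ((i:ℝ) - 1/2) :=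
            mul_le_mul h1 hr3 (by norm_num) (norm_nonneg _)
    by_cases hB : 0 ≤ (z σ).re ∨ R/2 ≤ |(z σ).im|
    · -- Case B
      have hlb : ∀ i : ℕ, R/2 ≤ ‖z σ + (i:ℂ)‖ := by
        intro i
        rcases hB with hB1 | hB2
        · have h := abs_add_nat_lb₅ (z σ) i hB1
          rw [← hRdef] at h
          linarith
        · have h := abs_add_nat_lb₄ (z σ) i
          linarith
      obtain ⟨i, hiS, hgood⟩ := exists_good_index T z (Finset.Icc (M-m) (M-1))
        (by rw [hTcard, Nat.card_Icc]; omega)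
      obtain ⟨hi1, hi2⟩ := Finset.mem_Icc.mp hiS
      have hiM : i < M := by omega
      obtain ⟨hr1, hr2, hr3⟩ := hSstd i hi1 hi2
      refine final i hiM hgood ?_
      calc R/2 = (R/2) * 1 := by ring
        _ ≤ ‖z σ + (i:ℂ)‖ * ((i:ℝ) - 1/2) :=
            mul_le_mul (hlb i) hr3 (by norm_num) (norm_nonneg _)
    · -- Case C
      push_neg at hB
      obtain ⟨hre_neg, him⟩ := hB
      have hreabs : |(z σ).re| ≤ R := by rw [hRdef]; exact Complex.abs_re_le_norm _
      have hrR : -(z σ).re ≤ R := le_trans (neg_le_abs _) hreabs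
      have hlbC : ∀ i : ℕ, |(z σ).re + (i:ℝ)| ≤ ‖z σ + (i:ℂ)‖ :=
        fun i => abs_add_nat_lb₃ (z σ) i
      rcases le_or_gt (M:ℝ) (-(z σ).re) with hC1 | hC1'
      · -- C1 : r ≥ M, use low slots Icc 2 (m+2)
        obtain ⟨i, hiS, hgood⟩ := exists_good_index T z (Finset.Icc 2 (m+2))
          (by rw [hTcard, Nat.card_Icc]; omega)
        obtain ⟨hi1, hi2⟩ := Finset.mem_Icc.mp hiS
        have hiM : i < M := by omega
        have hc1 : (2:ℝ) ≤ i := by exact_mod_cast hi1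
        have hc2 : (i:ℝ) ≤ (m:ℝ)+2 := by exact_mod_cast hi2
        refine final i hiM hgood ?_
        have h1 : (M:ℝ) - ((m:ℝ)+2) ≤ ‖z σ + (i:ℂ)‖ := by
          have h2 : (M:ℝ) - ((m:ℝ)+2) ≤ -((z σ).re + i) := by linarith
          calc (M:ℝ) - ((m:ℝ)+2) ≤ -((z σ).re + i) := h2
            _ ≤ |(z σ).re + (i:ℝ)| := neg_le_abs _
            _ ≤ _ := hlbC i
        calc R/2 ≤ ((M:ℝ) - ((m:ℝ)+2)) * (3/2) := by linarith
          _ ≤ ‖z σ + (i:ℂ)‖ * ((i:ℝ) - 1/2) :=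
              mul_le_mul h1 (by linarith) (by norm_num) (norm_nonneg _)
      rcases le_or_gt (2*(-(z σ).re)) (M:ℝ) with hC2 | hC2'
      · -- C2 : r ≤ M/2, use top slots
        obtain ⟨i, hiS, hgood⟩ := exists_good_index T z (Finset.Icc (M-m) (M-1))
          (by rw [hTcard, Nat.card_Icc]; omega)
        obtain ⟨hi1, hi2⟩ := Finset.mem_Icc.mp hiS
        have hiM : i < M := by omega
        obtain ⟨hr1, hr2, hr3⟩ := hSstd i hi1 hi2
        refine final i hiM hgood ?_
        have h1 : (M:ℝ)/2 - m ≤ ‖z σ + (i:ℂ)‖ := by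
          have h2 : (M:ℝ)/2 - m ≤ (z σ).re + i := by linarith
          calc (M:ℝ)/2 - m ≤ (z σ).re + i := h2
            _ ≤ |(z σ).re + (i:ℝ)| := le_abs_self _
            _ ≤ _ := hlbC i
        have hprod : (M:ℝ) ≤ ((M:ℝ)/2 - m) * ((M:ℝ) - m - 1/2) := by
          nlinarith [hMr, hf4r, hm3r]
        refine le_trans (le_of_lt (by linarith : R/2 < (M:ℝ))) (le_trans hprod ?_)
        exact mul_le_mul h1 (by linarith) (by linarith) (norm_nonneg _)
      · -- C3 : M/2 < r < M
        rcases Nat.lt_or_ge m 4 with hm4 | hm5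
        · -- m = 3, M = 24
          have hm3e : m = 3 := by omega
          subst hm3e
          have hM24e : M = 24 := by rw [hMfac]; rfl
          subst hM24e
          obtain ⟨i, hiS, hgood⟩ := exists_good_index T z (Finset.Icc 4 9)
            (by rw [hTcard, Nat.card_Icc]; omega)
          obtain ⟨hi1, hi2⟩ := Finset.mem_Icc.mp hiS
          have hiM : i < 24 := by omega
          have hc1 : (4:ℝ) ≤ i := by exact_mod_cast hi1
          have hc2 : (i:ℝ) ≤ 9 := by exact_mod_cast hi2
          refine final i hiM hgood ?_
          have h1 : 12 - (i:ℝ) ≤ ‖z σ + (i:ℂ)‖ := by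
            have h2 : 12 - (i:ℝ) ≤ -((z σ).re + i) := by
              push_cast at hC2' ⊢
              linarith
            calc 12 - (i:ℝ) ≤ -((z σ).re + i) := h2
              _ ≤ |(z σ).re + (i:ℝ)| := neg_le_abs _
              _ ≤ _ := hlbC i
          have h3 : (24:ℝ) ≤ (12 - (i:ℝ)) * ((i:ℝ) - 1/2) := by
            nlinarith [mul_nonneg (by linarith : (0:ℝ) ≤ (i:ℝ) - 4)
              (by linarith : (0:ℝ) ≤ 9 - (i:ℝ))]
          have h4 : R/2 < 24 := by
            push_cast at hRlt2M
            linarith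
          calc R/2 ≤ (12 - (i:ℝ)) * ((i:ℝ) - 1/2) := by linarith
            _ ≤ ‖z σ + (i:ℂ)‖ * ((i:ℝ) - 1/2) :=
                mul_le_mul_of_nonneg_right h1 (by linarith)
        · -- m ≥ 4
          have h24fac : 24 ≤ m ! := by
            calc 24 = 4 ! := by rfl
              _ ≤ m ! := Nat.factorial_le hm5
          have hf8 : 8*(m+1) ≤ M := by
            rw [hMfac, Nat.factorial_succ]
            calc 8*(m+1) = (m+1)*8 := by ring
              _ ≤ (m+1)*(m !) := Nat.mul_le_mul_left _ (by omega)
          have hf8r : 8*((m:ℝ)+1) ≤ (M:ℝ) := by exact_mod_cast hf8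
          have hm5r : (4:ℝ) ≤ (m:ℝ) := by exact_mod_cast hm5
          obtain ⟨i, hiS, hgood⟩ := exists_good_index T z (Finset.Icc (m+1) (2*(m+1)))
            (by rw [hTcard, Nat.card_Icc]; omega)
          obtain ⟨hi1, hi2⟩ := Finset.mem_Icc.mp hiS
          have hiM : i < M := by omega
          have hc1 : (m:ℝ)+1 ≤ i := by exact_mod_cast hi1
          have hc2 : (i:ℝ) ≤ 2*((m:ℝ)+1) := by exact_mod_cast hi2
          refine final i hiM hgood ?_
          have h1 : (M:ℝ)/4 ≤ ‖z σ + (i:ℂ)‖ := by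
            have h2 : (M:ℝ)/4 ≤ -((z σ).re + i) := by linarith
            calc (M:ℝ)/4 ≤ -((z σ).re + i) := h2
              _ ≤ |(z σ).re + (i:ℝ)| := neg_le_abs _
              _ ≤ _ := hlbC i
          have h3 : (M:ℝ) ≤ ((M:ℝ)/4) * ((m:ℝ) + 1/2) := by
            nlinarith [hMr, hm5r]
          calc R/2 ≤ ((M:ℝ)/4) * ((m:ℝ) + 1/2) := by linarith
            _ ≤ ‖z σ + (i:ℂ)‖ * ((i:ℝ) - 1/2) :=
                mul_le_mul h1 (by linarith) (by linarith) (norm_nonneg _)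

/-- **(Denef–Lipshitz bound, part (i).)** Let `K` be a number field of degree `n` over `ℚ`.
If `u ∈ ℤ \ {0}` and `ξ ∈ 𝓞 K` satisfy
`2^(n!+1) * ∏_{i=0}^{n!-1} (ξ + i)^(n!) ∣ u` in `𝓞 K`, then for every embedding
`σ : K → ℂ` one has `|σ(ξ)| ≤ (1/2) * |N(u)|^(1/n!)`. -/

theorem abs_le_of_dvd (K : Type*) [Field K] [NumberField K]
    (u : ℤ) (hu : u ≠ 0) (ξ : 𝓞 K)
    (hdvd : (2 : 𝓞 K) ^ ((Module.finrank ℚ K)! + 1) *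
        ∏ i ∈ Finset.range ((Module.finrank ℚ K)!),
          (ξ + (i : 𝓞 K)) ^ ((Module.finrank ℚ K)!) ∣ (u : 𝓞 K)) :
    ∀ σ : K →+* ℂ, ‖σ (ξ : K)‖ ≤
      (1 / 2 : ℝ) * (|(Algebra.norm ℚ ((u : K)))| : ℝ) ^ ((((Module.finrank ℚ K)! : ℝ))⁻¹) := by
  intro σ
  classical
  obtain ⟨m, hm⟩ : ∃ m, Module.finrank ℚ K = m + 1 :=
    ⟨Module.finrank ℚ K - 1, by
      have := Module.finrank_pos (R := ℚ) (M := K)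
      omega⟩
  set n := Module.finrank ℚ K with hndef
  set M := n ! with hMdef2
  have hM0 : 0 < M := Nat.factorial_pos n
  have hMfac : M = (m+1)! := by rw [hMdef2, hm]
  clear_value n
  clear_value M
  obtain ⟨v, hv⟩ := hdvd
  have hu' : (u : 𝓞 K) ≠ 0 := fun h => hu (by exact_mod_cast h)
  have hxi : ∀ i : ℕ, i < M → ξ + (i : 𝓞 K) ≠ 0 := by
    intro i hi h0
    apply hu'
    rw [hv]
    rw [Finset.prod_eq_zero (Finset.mem_range.mpr hi)
      (by rw [h0]; exact zero_pow (by omega))]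
    ring
  have hv0 : v ≠ 0 := by
    intro h0
    apply hu'
    rw [hv, h0, mul_zero]
  obtain ⟨g, hgdef⟩ : ∃ g : ℕ → ℚ,
      g = fun i : ℕ => Algebra.norm ℚ (((ξ + (i:𝓞 K) : 𝓞 K)) : K) := ⟨_, rfl⟩
  have hg1 : ∀ i : ℕ, i < M → (1:ℚ) ≤ |g i| := by
    intro i hi
    have h0 : Algebra.norm ℤ (ξ + (i:𝓞 K)) ≠ 0 := by
      rw [Algebra.norm_ne_zero_iff]
      exact hxi i hi
    have h1 : g i = ((Algebra.norm ℤ (ξ + (i:𝓞 K)) : ℤ) : ℚ) := by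
      rw [hgdef]; exact (Algebra.coe_norm_int _).symm
    rw [h1, ← Int.cast_abs]
    exact_mod_cast Int.one_le_abs h0
  have hw1 : (1:ℚ) ≤ |Algebra.norm ℚ ((v : K))| := by
    have h0 : Algebra.norm ℤ v ≠ 0 := by rw [Algebra.norm_ne_zero_iff]; exact hv0
    rw [← Algebra.coe_norm_int, ← Int.cast_abs]
    exact_mod_cast Int.one_le_abs h0
  have hnormu : Algebra.norm ℚ ((u : K)) = (u:ℚ)^n := by
    rw [show ((u:ℤ):K) = algebraMap ℚ K ((u:ℤ):ℚ) by rw [eq_ratCast]; push_cast; rfl]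
    rw [Algebra.norm_algebraMap, hndef]
  have hnorm2 : Algebra.norm ℚ ((2 : K)) = (2:ℚ)^n := by
    rw [show ((2:K)) = algebraMap ℚ K (2:ℚ) by rw [eq_ratCast]; norm_num]
    rw [Algebra.norm_algebraMap, hndef]
  have hQ : (u:ℚ)^n = (2:ℚ)^(n*(M+1)) * (∏ i ∈ Finset.range M, (g i)^M) *
      (Algebra.norm ℚ ((v : K))) := by
    have h1 := congrArg (fun t : 𝓞 K => Algebra.norm ℚ ((t : K))) hv
    simp only [NumberField.RingOfIntegers.coe_eq_algebraMap, map_mul, map_pow, map_prod,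
      map_add, map_natCast, map_ofNat, map_intCast] at h1
    rw [show ((u:ℤ):K) = algebraMap ℚ K ((u:ℤ):ℚ) by rw [eq_ratCast]; push_cast; rfl,
      Algebra.norm_algebraMap] at h1
    rw [hnorm2] at h1
    rw [← pow_mul] at h1
    rw [← hndef] at h1
    rw [h1]
    congr 2
    apply Finset.prod_congr rfl
    intro i _
    congr 1
    rw [hgdef]
    simp only [NumberField.RingOfIntegers.coe_eq_algebraMap, map_add, map_natCast]
  have hbound : ∀ i : ℕ, i < M → (2:ℚ)^(n*(M+1)) * |g i|^M ≤ |(u:ℚ)|^n := by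
    intro i hi
    have habs : |(u:ℚ)|^n = (2:ℚ)^(n*(M+1)) * (∏ j ∈ Finset.range M, |g j|^M) *
        |Algebra.norm ℚ ((v : K))| := by
      rw [← abs_pow, hQ]
      simp only [abs_mul, abs_pow, Finset.abs_prod, abs_two]
    have h1 : |g i|^M ≤ ∏ j ∈ Finset.range M, |g j|^M := by
      rw [← Finset.mul_prod_erase (Finset.range M) (fun j => |g j|^M) (Finset.mem_range.mpr hi)]
      have h2 : (1:ℚ) ≤ ∏ j ∈ (Finset.range M).erase i, |g j|^M := by
        rw [show (1:ℚ) = ∏ j ∈ (Finset.range M).erase i, (1:ℚ) by rw [Finset.prod_const_one]]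
        apply Finset.prod_le_prod (fun j _ => by norm_num)
        intro j hj
        calc (1:ℚ) = 1^M := (one_pow M).symm
          _ ≤ |g j|^M := pow_le_pow_left₀ (by norm_num)
              (hg1 j (Finset.mem_range.mp (Finset.mem_of_mem_erase hj))) M
      nlinarith [pow_nonneg (abs_nonneg (g i)) M]
    calc (2:ℚ)^(n*(M+1)) * |g i|^M
        ≤ (2:ℚ)^(n*(M+1)) * ∏ j ∈ Finset.range M, |g j|^M :=
          mul_le_mul_of_nonneg_left h1 (pow_nonneg (by norm_num) _)
      _ = ((2:ℚ)^(n*(M+1)) * ∏ j ∈ Finset.range M, |g j|^M) * 1 := by ring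
      _ ≤ ((2:ℚ)^(n*(M+1)) * ∏ j ∈ Finset.range M, |g j|^M) *
            |Algebra.norm ℚ ((v:K))| := by
          apply mul_le_mul_of_nonneg_left hw1
          exact mul_nonneg (pow_nonneg (by norm_num) _)
            (Finset.prod_nonneg fun j _ => pow_nonneg (abs_nonneg _) _)
      _ = |(u:ℚ)|^n := habs.symm
  have hcard : Fintype.card (K →ₐ[ℚ] ℂ) = m + 1 := by
    rw [AlgHom.card, ← hndef]
    exact hm
  obtain ⟨z, hzdef⟩ : ∃ z : (K →ₐ[ℚ] ℂ) → ℂ, z = fun τ => τ (ξ : K) := ⟨_, rfl⟩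
  have hNg : ∀ i : ℕ,
      (∏ τ : (K →ₐ[ℚ] ℂ), ‖z τ + (i:ℂ)‖) = ((|g i| : ℚ) : ℝ) := by
    intro i
    have h := Algebra.norm_eq_prod_embeddings ℚ ℂ (((ξ + (i:𝓞 K) : 𝓞 K)) : K)
    have h2 := congrArg (‖·‖) h
    rw [norm_prod] at h2
    have h3 : ∀ τ : (K →ₐ[ℚ] ℂ), τ (((ξ + (i:𝓞 K) : 𝓞 K)) : K) = z τ + (i:ℂ) := by
      intro τ
      rw [hzdef]
      rw [show (((ξ + (i:𝓞 K) : 𝓞 K)) : K) = (ξ : K) + ((i:ℕ):K) by push_cast; ring]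
      rw [map_add, map_natCast]
    rw [Finset.prod_congr rfl (fun τ _ => by rw [h3 τ])] at h2
    rw [← h2, eq_ratCast]
    rw [show ((Algebra.norm ℚ (((ξ + (i:𝓞 K):𝓞 K)):K) : ℚ) : ℂ)
        = (((Algebra.norm ℚ (((ξ + (i:𝓞 K):𝓞 K)):K) : ℚ):ℝ):ℂ) by push_cast; rfl]
    rw [Complex.norm_real, Real.norm_eq_abs, hgdef]
    push_cast
    rfl
  have hN1 : ∀ i : ℕ, i < M →
      (1:ℝ) ≤ ∏ τ : (K →ₐ[ℚ] ℂ), ‖z τ + (i:ℂ)‖ := by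
    intro i hi
    rw [hNg i]
    exact_mod_cast hg1 i hi
  obtain ⟨i, hiM, hkey⟩ := key_lemma hMfac hcard z (RingHom.toRatAlgHom σ) hN1
  have hzσ : z (RingHom.toRatAlgHom σ) = σ (ξ:K) := by
    rw [hzdef]
    rfl
  have hmain : (2 * ‖σ (ξ:K)‖)^M ≤ ((|(u:ℚ)|^n : ℚ) : ℝ) := by
    rw [← hzσ]
    refine hkey.trans ?_
    rw [hNg i]
    have hcoe : ((2:ℝ))^((m+1)*(M+1)) * (((|g i| : ℚ):ℝ))^M
        = (((2:ℚ)^(n*(M+1)) * |g i|^M : ℚ) : ℝ) := by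
      rw [hm]
      push_cast
      ring
    rw [hcoe]
    exact_mod_cast hbound i hiM
  have hxnn : (0:ℝ) ≤ 2 * ‖σ (ξ:K)‖ :=
    mul_nonneg (by norm_num) (norm_nonneg _)
  have h2R := Real.rpow_le_rpow (pow_nonneg hxnn M) hmain
    (inv_nonneg.mpr (Nat.cast_nonneg M))
  rw [Real.pow_rpow_inv_natCast hxnn (by omega)] at h2R
  have hAeq : ((|Algebra.norm ℚ ((u:K))| : ℚ) : ℝ) = ((|(u:ℚ)|^n : ℚ):ℝ) := by
    rw [hnormu, abs_pow]
  have hgoal : |((Algebra.norm ℚ ((u:K)) : ℚ) : ℝ)| = ((|(u:ℚ)|^n : ℚ):ℝ) := by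
    rw [← Rat.cast_abs, hAeq]
  rw [hgoal]
  linarith
end

section
/- Let ũ ∈ ℤ \ {0}, q ∈ ℤ and ξ ∈ O_K. If |σ(ξ)| ≤ (1/2) · |N(ũ)|^{1/n!} for every ring embedding σ : K → ℂ, and ũ divides ξ − q in O_K, then ξ ∈ ℤ. -/
open NumberField Nat Polynomial

private lemma ratInt (x : ℚ) (h : IsIntegral ℤ x) : ∃ z : ℤ, (z : ℚ) = x :=
  IsIntegrallyClosed.isIntegral_iff.mp h

private lemma ratIntC (c : ℚ) (h : IsIntegral ℤ ((c : ℂ))) : ∃ z : ℤ, (z : ℚ) = c := by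
  apply ratInt
  rwa [show ((c:ℂ)) = algebraMap ℚ ℂ c from rfl,
    isIntegral_algebraMap_iff (algebraMap ℚ ℂ).injective] at h

private lemma intOfRange {K : Type*} [Field K] [NumberField K] (ξ : 𝓞 K)
    (hx : (ξ : K) ∈ (algebraMap ℚ K).range) : ∃ z : ℤ, ξ = (z : 𝓞 K) := by
  obtain ⟨x, hx⟩ := hx
  have hint : IsIntegral ℤ x := by
    rw [← isIntegral_algebraMap_iff (algebraMap ℚ K).injective, hx]
    exact ξ.isIntegral_coe
  obtain ⟨z, hz⟩ := ratInt x hint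
  refine ⟨z, ?_⟩
  apply Subtype.val_injective
  show (ξ : K) = (z : K)
  rw [← hx, ← hz]
  simp

private lemma multisetDvd (u : ℤ) (s : Multiset ℂ)
    (h : ∀ x ∈ s, ∃ w : ℂ, IsIntegral ℤ w ∧ x = u * w) :
    ∃ W : ℂ, IsIntegral ℤ W ∧ s.prod = (u : ℂ) ^ (Multiset.card s) * W := by
  induction s using Multiset.induction with
  | empty => exact ⟨1, isIntegral_one, by simp⟩
  | cons x s ih =>
    obtain ⟨W, hW, hprod⟩ := ih (fun y hy => h y (Multiset.mem_cons_of_mem hy))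
    obtain ⟨w, hw, hx⟩ := h x (Multiset.mem_cons_self x s)
    exact ⟨w * W, hw.mul hW, by
      simp only [Multiset.prod_cons, Multiset.card_cons, hx, hprod]; ring⟩

private lemma multisetBound (s : Multiset ℂ) (b : ℝ) (hb : 0 ≤ b)
    (h : ∀ x ∈ s, ‖x‖ ≤ b) :
    ‖s.prod‖ ≤ b ^ Multiset.card s := by
  induction s using Multiset.induction with
  | empty => simp
  | cons x s ih =>
    have h1 := ih (fun y hy => h y (Multiset.mem_cons_of_mem hy))
    have h2 := h x (Multiset.mem_cons_self x s)
    simp only [Multiset.prod_cons, Multiset.card_cons, norm_mul, pow_succ]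
    calc ‖x‖ * ‖s.prod‖ ≤ b * b ^ Multiset.card s := by
          apply mul_le_mul h2 h1 (by positivity) hb
      _ = b ^ Multiset.card s * b := by ring

private lemma halfIntRange {K : Type*} [Field K] [CharZero K] (x : K) (z : ℤ)
    (h : 2 * x = (z : K)) : x ∈ (algebraMap ℚ K).range := by
  refine ⟨(z : ℚ) / 2, ?_⟩
  rw [map_div₀, map_intCast (algebraMap ℚ K) z,
    show algebraMap ℚ K 2 = 2 from map_ofNat _ 2, ← h]
  rw [mul_comm, mul_div_assoc]
  norm_num

set_option maxHeartbeats 1000000 in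
/-- **(Denef–Lipshitz, part (ii).)** Let `K` be a number field of degree `n` over `ℚ`.
Let `ũ ∈ ℤ \ {0}`, `q ∈ ℤ` and `ξ ∈ 𝓞 K`. If `|σ(ξ)| ≤ (1/2) * |N(ũ)|^(1/n!)` for every
embedding `σ : K → ℂ`, and `ũ ∣ ξ - q` in `𝓞 K`, then `ξ ∈ ℤ`. -/
theorem mem_int_of_bound_and_congr (K : Type*) [Field K] [NumberField K]
    (utilde : ℤ) (hu : utilde ≠ 0) (q : ℤ) (ξ : 𝓞 K)
    (hbound : ∀ σ : K →+* ℂ, ‖σ (ξ : K)‖ ≤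
      (1 / 2 : ℝ) * (|(Algebra.norm ℚ ((utilde : K)))| : ℝ) ^
        ((((Module.finrank ℚ K)! : ℝ))⁻¹))
    (hdvd : (utilde : 𝓞 K) ∣ ξ - (q : 𝓞 K)) :
    ∃ z : ℤ, ξ = (z : 𝓞 K) := by
  by_cases hrange : (ξ : K) ∈ (algebraMap ℚ K).range
  · exact intOfRange ξ hrange
  exfalso
  classical
  set n := Module.finrank ℚ K with hn
  have hn1 : 1 ≤ n := Module.finrank_pos
  set a : ℝ := |(utilde : ℝ)| with ha
  have ha1 : 1 ≤ a := by
    rw [ha, ← Int.cast_abs]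
    exact_mod_cast Int.one_le_abs hu
  have hNu : (|(Algebra.norm ℚ ((utilde : K)))| : ℝ) = a ^ n := by
    have h1 : ((utilde : K)) = algebraMap ℚ K (utilde : ℚ) := by simp
    rw [h1, Algebra.norm_algebraMap]
    push_cast [abs_pow]
    rw [ha]
  have hB : ∀ σ : K →ₐ[ℚ] ℂ, ‖σ (ξ : K)‖ ≤
      (1 / 2 : ℝ) * (a ^ n) ^ (((n)! : ℝ))⁻¹ := by
    intro σ
    have := hbound σ.toRingHom
    rwa [hNu] at this
  have hxi : IsIntegral ℚ (ξ : K) := (ξ.isIntegral_coe).tower_top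
  -- the embedding-product formula for norms
  have hnormprod : ∀ x : K, algebraMap ℚ ℂ (Algebra.norm ℚ x) = ∏ σ : K →ₐ[ℚ] ℂ, σ x :=
    fun x => Algebra.norm_eq_prod_embeddings ℚ ℂ x
  -- the case |utilde| = 1 : all conjugates are < 1, so ξ = 0, contradiction
  by_cases hu1 : a = 1
  · have hN := hnormprod (ξ : K)
    obtain ⟨zN, hzN⟩ := ratInt (Algebra.norm ℚ (ξ : K))
      (Algebra.isIntegral_norm ℚ (ξ.isIntegral_coe))
    have habs : ‖algebraMap ℚ ℂ (Algebra.norm ℚ (ξ : K))‖ ≤ (1/2 : ℝ) ^ n := by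
      rw [hN, norm_prod]
      calc ∏ σ : K →ₐ[ℚ] ℂ, ‖σ (ξ : K)‖ ≤ ∏ _σ : K →ₐ[ℚ] ℂ, (1/2 : ℝ) := by
            apply Finset.prod_le_prod (fun σ _ => by positivity)
            intro σ _
            have := hB σ
            rwa [hu1, one_pow, Real.one_rpow, mul_one] at this
        _ = (1/2 : ℝ) ^ n := by
            rw [Finset.prod_const, Finset.card_univ, AlgHom.card]
    have hlt : ‖algebraMap ℚ ℂ (Algebra.norm ℚ (ξ : K))‖ < 1 := by
      refine lt_of_le_of_lt habs ?_
      have : (1/2 : ℝ) ^ n < 1 ^ n := by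
        apply pow_lt_pow_left₀ (by norm_num) (by norm_num)
        omega
      simpa using this
    have hzN0 : zN = 0 := by
      have : ‖algebraMap ℚ ℂ (Algebra.norm ℚ (ξ : K))‖ = |(zN : ℝ)| := by
        rw [← hzN]
        rw [show (algebraMap ℚ ℂ ((zN:ℚ))) = (((zN : ℝ) : ℂ)) by push_cast [map_ofNat, map_intCast]; rfl]
        rw [Complex.norm_real, Real.norm_eq_abs]
      rw [this] at hlt
      have : |zN| < 1 := by exact_mod_cast hlt
      exact Int.abs_lt_one_iff.mp this
    have : Algebra.norm ℚ (ξ : K) = 0 := by rw [← hzN, hzN0]; simp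
    have hξ0 : (ξ : K) = 0 := by
      rwa [Algebra.norm_eq_zero_iff] at this
    exact hrange ⟨0, by simp [hξ0]⟩
  have ha2 : 2 ≤ a := by
    have h1 : 1 ≤ |utilde| := Int.one_le_abs hu
    rcases eq_or_lt_of_le h1 with h | h
    · exfalso; apply hu1; rw [ha, ← Int.cast_abs, ← h]; norm_num
    · rw [ha, ← Int.cast_abs]; exact_mod_cast h
  -- β and pairwise divisibility
  obtain ⟨β, hβ⟩ := hdvd
  have hβK : (ξ : K) - (q : K) = (utilde : K) * (β : K) := by
    have : ((ξ - (q : 𝓞 K) : 𝓞 K) : K) = (((utilde : 𝓞 K) * β : 𝓞 K) : K) := congrArg _ hβ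
    push_cast [map_ofNat, map_intCast] at this
    exact this
  have hpair : ∀ σ τ : K →ₐ[ℚ] ℂ, ∃ w : ℂ, IsIntegral ℤ w ∧
      σ (ξ : K) - τ (ξ : K) = (utilde : ℂ) * w := by
    intro σ τ
    refine ⟨σ (β : K) - τ (β : K),
      ((β.isIntegral_coe).map σ.toRingHom.toIntAlgHom).sub
        ((β.isIntegral_coe).map τ.toRingHom.toIntAlgHom), ?_⟩
    have h1 := congrArg σ hβK
    have h2 := congrArg τ hβK
    simp only [map_sub, map_mul, map_intCast] at h1 h2
    linear_combination h1 - h2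
  -- minimal polynomial setup
  set p := minpoly ℚ (ξ : K) with hp
  have hpmonic : p.Monic := minpoly.monic hxi
  set m := p.natDegree with hm
  have hm2 : 2 ≤ m := (minpoly.two_le_natDegree_iff hxi).mpr hrange
  have hmn : m ≤ n := minpoly.natDegree_le (ξ : K)
  rcases lt_or_ge n 3 with hn2 | hn3
  · -- case n = 2
    have hn2' : n = 2 := by omega
    -- traces are integers
    have htr : ∀ x : K, algebraMap ℚ ℂ (Algebra.trace ℚ K x) = ∑ σ : K →ₐ[ℚ] ℂ, σ x := by
      intro x
      rw [trace_eq_sum_embeddings ℂ (x := x)]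
    obtain ⟨zt, hzt⟩ := ratInt (Algebra.trace ℚ K (ξ : K))
      (Algebra.isIntegral_trace ξ.isIntegral_coe)
    obtain ⟨zs, hzs⟩ := ratInt (Algebra.trace ℚ K (β : K))
      (Algebra.isIntegral_trace β.isIntegral_coe)
    -- the trace identity : zt - 2q = utilde * zs
    have hid : zt - 2 * q = utilde * zs := by
      have h1 := congrArg (Algebra.trace ℚ K) hβK
      rw [map_sub, show ((q : K)) = algebraMap ℚ K (q : ℚ) by simp,
        Algebra.trace_algebraMap,
        show ((utilde : K)) * (β : K) = (utilde : ℚ) • (β : K) by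
          rw [Algebra.smul_def]; norm_num,
        _root_.map_smul, ← hzt, ← hzs, ← hn, hn2'] at h1
      have h2 : (zt : ℚ) - 2 * q = utilde * zs := by
        simp only [nsmul_eq_mul, smul_eq_mul] at h1
        push_cast [map_ofNat, map_intCast] at h1 ⊢
        linarith [h1]
      exact_mod_cast h2
    -- the elements η = 2ξ - zt and γ = 2β - zs, with utilde * γ = η
    set η : 𝓞 K := 2 * ξ - (zt : 𝓞 K) with hη
    set γ : 𝓞 K := 2 * β - (zs : 𝓞 K) with hγ
    have huγ : (utilde : 𝓞 K) * γ = η := by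
      rw [hγ, hη]
      have hid'' : ((utilde * zs : ℤ) : 𝓞 K) = ((zt - 2 * q : ℤ) : 𝓞 K) := by
        rw [show utilde * zs = zt - 2 * q by omega]
      calc (utilde : 𝓞 K) * (2 * β - (zs : 𝓞 K))
          = 2 * ((utilde : 𝓞 K) * β) - ((utilde * zs : ℤ) : 𝓞 K) := by push_cast [map_ofNat, map_intCast]; ring
        _ = 2 * (ξ - (q : 𝓞 K)) - ((zt - 2 * q : ℤ) : 𝓞 K) := by rw [← hβ, hid'']
        _ = 2 * ξ - (zt : 𝓞 K) := by push_cast [map_ofNat, map_intCast]; ring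
    have hηK : ((η : K)) = (utilde : K) * ((γ : K)) := by
      have := congrArg (algebraMap (𝓞 K) K) huγ
      push_cast [map_ofNat, map_intCast] at this
      exact this.symm
    -- norms
    have hcg : Algebra.norm ℚ ((η : K)) = (utilde : ℚ) ^ 2 * Algebra.norm ℚ ((γ : K)) := by
      rw [hηK, map_mul, show ((utilde : K)) = algebraMap ℚ K (utilde : ℚ) by simp,
        Algebra.norm_algebraMap, ← hn, hn2']
    obtain ⟨zg, hzg⟩ := ratInt (Algebra.norm ℚ ((γ : K)))
      (Algebra.isIntegral_norm ℚ (γ.isIntegral_coe))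
    -- the two embeddings
    have hcard2 : Fintype.card (K →ₐ[ℚ] ℂ) = 2 := by rw [AlgHom.card, ← hn, hn2']
    obtain ⟨σ, τ, hστ⟩ := Fintype.exists_pair_of_one_lt_card (by rw [hcard2]; omega)
    have huniv : (Finset.univ : Finset (K →ₐ[ℚ] ℂ)) = {σ, τ} :=
      (Finset.eq_univ_of_card {σ, τ} (by rw [Finset.card_pair hστ, hcard2])).symm
    have hsum : σ (ξ : K) + τ (ξ : K) = ((zt : ℚ) : ℂ) := by
      have h1 := htr (ξ : K)
      rw [← hzt, huniv, Finset.sum_pair hστ] at h1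
      rw [← h1]
      norm_cast
    have hηc : ((η : K)) = 2 * (ξ : K) - ((zt : ℤ) : K) := by
      rw [hη]; push_cast [map_ofNat, map_intCast]; ring
    have hση : σ ((η : K)) = σ (ξ : K) - τ (ξ : K) := by
      rw [hηc, map_sub, map_mul, map_ofNat, show (((zt : ℤ) : K)) = algebraMap ℚ K (zt : ℚ) by
        push_cast [map_ofNat, map_intCast]; simp, AlgHom.commutes]
      have : algebraMap ℚ ℂ ((zt : ℚ)) = σ (ξ : K) + τ (ξ : K) := by
        rw [hsum]; norm_cast
      rw [this]; ring
    have hτη : τ ((η : K)) = τ (ξ : K) - σ (ξ : K) := by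
      rw [hηc, map_sub, map_mul, map_ofNat, show (((zt : ℤ) : K)) = algebraMap ℚ K (zt : ℚ) by
        push_cast [map_ofNat, map_intCast]; simp, AlgHom.commutes]
      have : algebraMap ℚ ℂ ((zt : ℚ)) = σ (ξ : K) + τ (ξ : K) := by
        rw [hsum]; norm_cast
      rw [this]; ring
    have hprodη : algebraMap ℚ ℂ (Algebra.norm ℚ ((η : K))) = σ ((η : K)) * τ ((η : K)) := by
      rw [hnormprod, huniv, Finset.prod_pair hστ]
    -- η² = - norm η
    have hηsq : ((η : K)) ^ 2 = algebraMap ℚ K (-(Algebra.norm ℚ ((η : K)))) := by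
      apply σ.toRingHom.injective
      show σ (((η : K)) ^ 2) = σ (algebraMap ℚ K (-(Algebra.norm ℚ ((η : K)))))
      rw [map_pow, AlgHom.commutes, map_neg, hprodη, hση, hτη]
      ring
    -- the bound |norm η| ≤ a²
    have hBB2 : ((1 : ℝ) * ((a ^ n) ^ (((n)! : ℝ))⁻¹)) ^ 2 = a ^ 2 := by
      rw [one_mul, hn2', Nat.factorial_two]
      exact Real.rpow_inv_natCast_pow (by positivity) (by norm_num)
    have hbc : |((Algebra.norm ℚ ((η : K))) : ℝ)| ≤ a ^ 2 := by
      have h1 : |((Algebra.norm ℚ ((η : K))) : ℝ)|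
          = ‖algebraMap ℚ ℂ (Algebra.norm ℚ ((η : K)))‖ := by
        rw [show (algebraMap ℚ ℂ (Algebra.norm ℚ ((η : K))))
            = ((((Algebra.norm ℚ ((η : K))) : ℝ) : ℂ)) by norm_cast, Complex.norm_real, Real.norm_eq_abs]
      rw [h1, hprodη, norm_mul, hση, hτη]
      have hb1 : ‖σ (ξ : K) - τ (ξ : K)‖ ≤ 1 * ((a ^ n) ^ (((n)! : ℝ))⁻¹) := by
        calc ‖σ (ξ : K) - τ (ξ : K)‖
            ≤ ‖σ (ξ : K)‖ + ‖τ (ξ : K)‖ :=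
              norm_sub_le _ _
          _ ≤ 1 * ((a ^ n) ^ (((n)! : ℝ))⁻¹) := by
              have := hB σ; have := hB τ; linarith
      have hb2 : ‖τ (ξ : K) - σ (ξ : K)‖ ≤ 1 * ((a ^ n) ^ (((n)! : ℝ))⁻¹) := by
        rw [show τ (ξ : K) - σ (ξ : K) = -(σ (ξ : K) - τ (ξ : K)) by ring, norm_neg]
        exact hb1
      calc ‖σ (ξ : K) - τ (ξ : K)‖ * ‖τ (ξ : K) - σ (ξ : K)‖
          ≤ (1 * ((a ^ n) ^ (((n)! : ℝ))⁻¹)) ^ 2 := by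
            rw [sq]
            apply mul_le_mul hb1 hb2 (by positivity) (by positivity)
        _ = a ^ 2 := hBB2
    -- so |zg| ≤ 1
    have hzg1 : zg = 0 ∨ zg = 1 ∨ zg = -1 := by
      have h1 : |((Algebra.norm ℚ ((η : K))) : ℝ)| = |(zg : ℝ)| * a ^ 2 := by
        rw [hcg, ← hzg]
        push_cast [map_ofNat, map_intCast]
        rw [abs_mul, abs_pow, ha, mul_comm]
      rw [h1] at hbc
      have ha2' : (0 : ℝ) < a ^ 2 := by positivity
      have : |(zg : ℝ)| ≤ 1 := by
        by_contra hcon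
        push_neg at hcon
        nlinarith
      have h3 : |zg| ≤ 1 := by exact_mod_cast this
      have h4 := abs_le.mp h3
      omega
    -- finish by cases on zg
    have hu2 : ((utilde : K)) ≠ 0 := by
      simpa using (Int.cast_ne_zero (α := K)).mpr hu
    rcases hzg1 with hzg0 | hzg0 | hzg0
    · -- γ = 0, so 2ξ = zt and ξ is rational
      have hγn : Algebra.norm ℚ ((γ : K)) = 0 := by rw [← hzg, hzg0]; simp
      have hγ0 : ((γ : K)) = 0 := by rwa [Algebra.norm_eq_zero_iff] at hγn
      have hη0 : ((η : K)) = 0 := by rw [hηK, hγ0, mul_zero]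
      rw [hηc] at hη0
      exact hrange (halfIntRange _ zt (by linear_combination hη0))
    · -- norm γ = 1 : γ² = -1 and we get a mod-4 contradiction
      have hc2 : Algebra.norm ℚ ((η : K)) = (utilde : ℚ) ^ 2 := by
        rw [hcg, ← hzg, hzg0]; simp
      have hγsq : ((γ : K)) ^ 2 = -1 := by
        have h1 : ((utilde : K) * ((γ : K))) ^ 2 = -((utilde : K)) ^ 2 := by
          rw [← hηK, hηsq, hc2, map_neg]
          congr 1
          rw [map_pow]
          congr 1
          simp
        have h2 : ((utilde : K)) ^ 2 * ((γ : K)) ^ 2 = ((utilde : K)) ^ 2 * (-1) := by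
          rw [← mul_pow, h1]; ring
        exact mul_left_cancel₀ (pow_ne_zero 2 hu2) h2
      -- γ = 2β - zs, so (2β - zs)² = -1 in 𝓞 K
      have hγsq' : γ ^ 2 = -1 := by
        apply Subtype.val_injective
        push_cast [map_ofNat, map_intCast]
        exact hγsq
      set w : 𝓞 K := zs * β - β ^ 2 with hw
      have h4 : ((zs ^ 2 + 1 : ℤ) : 𝓞 K) = 4 * w := by
        rw [hw]
        have : γ ^ 2 = (2 * β - (zs : 𝓞 K)) ^ 2 := by rw [hγ]
        rw [this] at hγsq'
        push_cast [map_ofNat, map_intCast]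
        linear_combination hγsq'
      -- w is rational, hence an integer zw
      obtain ⟨zw, hzw⟩ := intOfRange w (by
        refine ⟨((zs ^ 2 + 1 : ℤ) : ℚ) / 4, ?_⟩
        have h5 := congrArg (algebraMap (𝓞 K) K) h4
        push_cast [map_ofNat, map_intCast] at h5
        rw [map_div₀, map_intCast (algebraMap ℚ K) (zs ^ 2 + 1),
          show algebraMap ℚ K 4 = 4 from map_ofNat _ 4]
        rw [eq_comm, eq_div_iff (by norm_num : (4 : K) ≠ 0)]
        push_cast [map_ofNat, map_intCast]
        linear_combination -h5)
      -- then zs² + 1 = 4 zw in ℤ, impossible mod 4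
      have hfin : zs ^ 2 + 1 = 4 * zw := by
        have := congrArg (algebraMap (𝓞 K) K) h4
        rw [hzw] at this
        push_cast [map_ofNat, map_intCast] at this
        exact_mod_cast this
      rcases Int.even_or_odd zs with ⟨k, hk⟩ | ⟨k, hk⟩
      · have hk2 : zs ^ 2 = 4 * k ^ 2 := by rw [hk]; ring
        omega
      · have hk2 : zs ^ 2 = 4 * (k ^ 2 + k) + 1 := by rw [hk]; ring
        omega
    · -- norm γ = -1 : η = ± utilde, so ξ is rational
      have hc2 : Algebra.norm ℚ ((η : K)) = -(utilde : ℚ) ^ 2 := by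
        rw [hcg, ← hzg, hzg0]; simp
      have hηsq' : ((η : K)) ^ 2 = ((utilde : K)) ^ 2 := by
        rw [hηsq, hc2, neg_neg, map_pow]
        congr 1
        simp
      have : (((η : K)) - (utilde : K)) * (((η : K)) + (utilde : K)) = 0 := by
        linear_combination hηsq'
      apply hrange
      rcases mul_eq_zero.mp this with h | h
      · rw [hηc] at h
        refine halfIntRange _ (zt + utilde) ?_
        push_cast [map_ofNat, map_intCast]
        linear_combination h
      · rw [hηc] at h
        refine halfIntRange _ (zt - utilde) ?_
        push_cast [map_ofNat, map_intCast]
        linear_combination h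
  · -- case n ≥ 3
    have hsplits : Splits (p.map (algebraMap ℚ ℂ)) := IsAlgClosed.splits _
    have hpne : p ≠ 0 := minpoly.ne_zero hxi
    have hcardroots : Multiset.card (p.aroots ℂ) = m := by
      rw [aroots_def, ← hsplits.natDegree_eq_card_roots, natDegree_map]
    have hroot_mem : ∀ σ : K →ₐ[ℚ] ℂ, σ (ξ : K) ∈ p.aroots ℂ := by
      intro σ
      rw [mem_aroots]
      exact ⟨hpne, by rw [hp, aeval_algHom_apply, minpoly.aeval, map_zero]⟩
    have hroot_surj : ∀ r ∈ p.aroots ℂ, ∃ τ : K →ₐ[ℚ] ℂ, τ (ξ : K) = r := by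
      intro r hr
      have hmem : r ∈ p.rootSet ℂ := by
        rw [mem_rootSet]
        exact ⟨hpne, (mem_aroots.mp hr).2⟩
      rw [hp, ← NumberField.Embeddings.range_eval_eq_rootSet_minpoly K ℂ] at hmem
      obtain ⟨f, hf⟩ := hmem
      exact ⟨RingHom.equivRatAlgHom (R := K) (S := ℂ) f, hf⟩
    -- the element D
    set D := Algebra.norm ℚ (aeval (ξ : K) (derivative p)) with hD
    have hD0 : aeval (ξ : K) (derivative p) ≠ 0 :=
      (Algebra.IsSeparable.isSeparable ℚ (ξ : K)).aeval_derivative_ne_zero (minpoly.aeval ℚ _)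
    have hDne : D ≠ 0 := by
      rw [hD, ne_eq, Algebra.norm_eq_zero_iff]
      exact hD0
    have hDprod : algebraMap ℚ ℂ D = ∏ σ : K →ₐ[ℚ] ℂ,
        (((p.aroots ℂ).erase (σ (ξ : K))).map fun x => σ (ξ : K) - x).prod := by
      rw [hD, hnormprod]
      refine Finset.prod_congr rfl (fun σ _ => ?_)
      rw [← aeval_algHom_apply, ← eval_map_algebraMap, ← derivative_map]
      exact hsplits.eval_root_derivative (hpmonic.map _) (hroot_mem σ)
    set e := n * (m - 1) with he
    have he1 : 1 ≤ e := by
      have : 1 ≤ m - 1 := by omega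
      calc 1 ≤ n * 1 := by omega
        _ ≤ n * (m - 1) := by exact Nat.mul_le_mul_left n this
    -- divisibility
    have hdvdD : ∃ W : ℂ, IsIntegral ℤ W ∧
        algebraMap ℚ ℂ D = (utilde : ℂ) ^ e * W := by
      have hσ : ∀ σ : K →ₐ[ℚ] ℂ, ∃ W : ℂ, IsIntegral ℤ W ∧
          (((p.aroots ℂ).erase (σ (ξ : K))).map fun x => σ (ξ : K) - x).prod
            = (utilde : ℂ) ^ (m - 1) * W := by
        intro σ
        have hall : ∀ x ∈ (((p.aroots ℂ).erase (σ (ξ : K))).map fun y => σ (ξ : K) - y),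
            ∃ w : ℂ, IsIntegral ℤ w ∧ x = (utilde : ℂ) * w := by
          intro x hx
          obtain ⟨y, hy, hxy⟩ := Multiset.mem_map.mp hx
          obtain ⟨τ, hτ⟩ := hroot_surj y (Multiset.mem_of_mem_erase hy)
          obtain ⟨w, hw, hweq⟩ := hpair σ τ
          refine ⟨w, hw, ?_⟩
          rw [← hxy, ← hτ]
          exact hweq
        obtain ⟨W, hW, hprod⟩ := multisetDvd utilde _ hall
        refine ⟨W, hW, ?_⟩
        rw [Multiset.card_map, Multiset.card_erase_of_mem (hroot_mem σ), hcardroots] at hprod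
        simpa [Nat.pred_eq_sub_one] using hprod
      choose W hWint hWeq using hσ
      refine ⟨∏ σ, W σ, ?_, ?_⟩
      · exact IsIntegral.prod _ (fun σ _ => hWint σ)
      · rw [hDprod, Finset.prod_congr rfl (fun σ _ => hWeq σ), Finset.prod_mul_distrib,
          Finset.prod_const, Finset.card_univ, AlgHom.card, ← hn, ← pow_mul,
          Nat.mul_comm (m - 1) n]
    obtain ⟨W, hWint, hWeq⟩ := hdvdD
    -- D / u^e is a nonzero integer
    set c : ℚ := D / (utilde : ℚ) ^ e with hc
    have huQ : ((utilde : ℚ)) ≠ 0 := Int.cast_ne_zero.mpr hu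
    have hcC : ((c : ℂ)) = W := by
      have huC : ((utilde : ℂ)) ≠ 0 := Int.cast_ne_zero.mpr hu
      rw [hc]
      push_cast [map_ofNat, map_intCast]
      rw [show ((D : ℂ)) = algebraMap ℚ ℂ D from rfl, hWeq]
      field_simp
    obtain ⟨z, hz⟩ := ratIntC c (by rw [hcC]; exact hWint)
    have hz0 : z ≠ 0 := by
      intro h0
      apply hDne
      have : c = 0 := by rw [← hz, h0]; simp
      rw [hc, _root_.div_eq_zero_iff] at this
      rcases this with h | h
      · exact h
      · exact absurd h (pow_ne_zero e huQ)
    -- lower bound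
    have hDabs : |(D : ℝ)| = |(z : ℝ)| * a ^ e := by
      have : (D : ℝ) = (z : ℝ) * (utilde : ℝ) ^ e := by
        have : D = (z : ℚ) * (utilde : ℚ) ^ e := by
          rw [hz, hc]; field_simp
        exact_mod_cast congrArg (fun t : ℚ => (t : ℝ)) this
      rw [this, abs_mul, abs_pow, ha]
    have hlow : a ^ e ≤ |(D : ℝ)| := by
      rw [hDabs]
      have : (1 : ℝ) ≤ |(z : ℝ)| := by
        rw [← Int.cast_abs]
        exact_mod_cast Int.one_le_abs hz0
      nlinarith [pow_pos (by linarith : (0:ℝ) < a) e]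
    -- upper bound
    set BB : ℝ := (a ^ n) ^ (((n)! : ℝ))⁻¹ with hBB
    have hBB0 : 0 ≤ BB := by
      rw [hBB]; positivity
    have hup : |(D : ℝ)| ≤ BB ^ e := by
      have h1 : |(D : ℝ)| = ‖algebraMap ℚ ℂ D‖ := by
        rw [show (algebraMap ℚ ℂ D) = (((D : ℝ) : ℂ)) by norm_cast, Complex.norm_real, Real.norm_eq_abs]
      rw [h1, hDprod, norm_prod]
      calc ∏ σ : K →ₐ[ℚ] ℂ, ‖(((p.aroots ℂ).erase (σ (ξ : K))).map
              fun x => σ (ξ : K) - x).prod‖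
          ≤ ∏ _σ : K →ₐ[ℚ] ℂ, BB ^ (m - 1) := by
            apply Finset.prod_le_prod (fun σ _ => by positivity)
            intro σ _
            have := multisetBound (((p.aroots ℂ).erase (σ (ξ : K))).map
              fun x => σ (ξ : K) - x) BB hBB0 ?_
            · rwa [Multiset.card_map, Multiset.card_erase_of_mem (hroot_mem σ),
                hcardroots] at this
            · intro x hx
              obtain ⟨y, hy, hxy⟩ := Multiset.mem_map.mp hx
              obtain ⟨τ, hτ⟩ := hroot_surj y (Multiset.mem_of_mem_erase hy)
              rw [← hxy, ← hτ]
              calc ‖σ (ξ:K) - τ (ξ:K)‖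
                  ≤ ‖σ (ξ:K)‖ + ‖τ (ξ:K)‖ :=
                    norm_sub_le _ _
                _ ≤ (1/2:ℝ) * BB + (1/2:ℝ) * BB := add_le_add (hB σ) (hB τ)
                _ = BB := by ring
        _ = BB ^ e := by
          rw [Finset.prod_const, Finset.card_univ, AlgHom.card, ← hn, ← pow_mul,
            Nat.mul_comm (m - 1) n]
    -- combine: a ^ (e * n!) ≤ a ^ (n * e), contradiction
    have hfac0 : ((n)! : ℕ) ≠ 0 := Nat.factorial_ne_zero n
    have hkey : (a ^ e) ^ (n)! ≤ (a ^ n) ^ e := by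
      have h1 : a ^ e ≤ BB ^ e := le_trans hlow hup
      have h2 : (a ^ e) ^ (n)! ≤ (BB ^ e) ^ (n)! := by
        apply pow_le_pow_left₀ (by positivity) h1
      refine h2.trans_eq ?_
      rw [← pow_mul, mul_comm e (n)!, pow_mul, hBB,
        Real.rpow_inv_natCast_pow (by positivity) hfac0, ← pow_mul, mul_comm n e, pow_mul]
    have hexp : e * (n)! ≤ n * e := by
      rw [← pow_mul, ← pow_mul] at hkey
      exact (pow_le_pow_iff_right₀ (by linarith : (1:ℝ) < a)).mp hkey
    have : (n)! ≤ n := by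
      rw [mul_comm n e] at hexp
      exact Nat.le_of_mul_le_mul_left hexp (by omega)
    exact absurd this (Nat.not_le.mpr (Nat.lt_factorial_self hn3))
end

section
/- Let K ⊆ M be number fields with M a finite extension of K, and let N : O_M^× → O_K^× be the group homomorphism on unit groups induced by the relative field norm N_{M/K}. Then the kernel of N is a finitely generated abelian group whose rank (the rank of its quotient by its torsion subgroup) equals (r_M + s_M) − (r_K + s_K), where for a number field F, r_F denotes the number of real embeddings of F and s_F the number of conjugate pairs of complex embeddings of F. Equivalently, the rank of ker N equals the rank of the unit group O_M^× minus the rank of the unit group O_K^×. -/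
open NumberField NumberField.InfinitePlace
open scoped TensorProduct

open Module Cardinal

section AuxGeneral

private lemma aux_rank_tensor (G : Type*) [AddCommGroup G] :
    Module.rank ℚ (ℚ ⊗[ℤ] G) = Module.rank ℤ G := by
  have : IsLocalizedModule (nonZeroDivisors ℤ) (TensorProduct.mk ℤ ℚ G 1) :=
    (isLocalizedModule_iff_isBaseChange (nonZeroDivisors ℤ) ℚ _).mpr
      (TensorProduct.isBaseChange ℤ G ℚ)
  exact (IsLocalization.rank_eq ℚ (nonZeroDivisors ℤ) le_rfl).trans
    (@IsLocalizedModule.rank_eq ℤ G _ _ _ (nonZeroDivisors ℤ) le_rfl _ _ _ (TensorProduct.mk ℤ ℚ G 1) this)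

private lemma aux_finrank_tensor (G : Type*) [AddCommGroup G] :
    Module.finrank ℚ (ℚ ⊗[ℤ] G) = (Module.rank ℤ G).toNat := by
  rw [Module.finrank, aux_rank_tensor]

/-- The rank of the range of `f` equals the rank of `H` if there is `ι` with
`f ∘ ι = n • id`, `n ≠ 0`. -/
private lemma aux_rank_range {G H : Type*} [AddCommGroup G] [AddCommGroup H]
    (f : G →ₗ[ℤ] H) (ι : H →ₗ[ℤ] G) (n : ℕ) (hn : n ≠ 0)
    (hcomp : f ∘ₗ ι = (n : ℤ) • LinearMap.id) :
    Module.rank ℤ ↥(LinearMap.range f) = Module.rank ℤ H := by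
  have hker : Module.rank ℤ ↥(LinearMap.ker ((n : ℤ) • (LinearMap.id : H →ₗ[ℤ] H))) = 0 := by
    rw [_root_.rank_eq_zero_iff_isTorsion]
    intro x
    refine ⟨⟨(n : ℤ), mem_nonZeroDivisors_of_ne_zero (by exact_mod_cast hn)⟩, ?_⟩
    ext
    show (n : ℤ) • (x : H) = 0
    have h2 : ((n : ℤ) • (LinearMap.id : H →ₗ[ℤ] H)) (x : H) = 0 := x.2
    simpa using h2
  have h1 := rank_quotient_add_rank_of_isDomain (R := ℤ) (M := H)
    (LinearMap.ker ((n : ℤ) • (LinearMap.id : H →ₗ[ℤ] H)))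
  rw [((n : ℤ) • (LinearMap.id : H →ₗ[ℤ] H)).quotKerEquivRange.rank_eq, hker, add_zero] at h1
  refine le_antisymm (Submodule.rank_le _) ?_
  rw [← h1]
  exact Submodule.rank_mono (hcomp ▸ LinearMap.range_comp_le_range ι f)

end AuxGeneral

section AuxUnits

variable (F : Type*) [Field F] [NumberField F]

private lemma aux_rank_units :
    Module.rank ℤ (Additive (𝓞 F)ˣ) = (Units.rank F : Cardinal) := by
  set f := AddMonoidHom.toIntLinearMap (M := Additive (𝓞 F)ˣ)
    (M₂ := Additive ((𝓞 F)ˣ ⧸ Units.torsion F))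
    (MonoidHom.toAdditive (QuotientGroup.mk' (Units.torsion F))) with hf
  have hsurj : Function.Surjective f := QuotientGroup.mk'_surjective (Units.torsion F)
  have hker : Module.rank ℤ ↥(LinearMap.ker f) = 0 := by
    rw [_root_.rank_eq_zero_iff_isTorsion]
    intro x
    have hx : Additive.toMul (x : Additive (𝓞 F)ˣ) ∈ Units.torsion F := by
      have := x.2
      rw [LinearMap.mem_ker] at this
      have h2 : QuotientGroup.mk' (Units.torsion F) (Additive.toMul (x : Additive (𝓞 F)ˣ)) = 1 := by
        exact_mod_cast this
      rwa [← MonoidHom.mem_ker, QuotientGroup.ker_mk'] at h2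
    obtain ⟨m, hm, hpow⟩ := isOfFinOrder_iff_pow_eq_one.mp hx
    refine ⟨⟨(m : ℤ), mem_nonZeroDivisors_of_ne_zero (by exact_mod_cast hm.ne')⟩, ?_⟩
    have hx0 : (m : ℤ) • (x : Additive (𝓞 F)ˣ) = 0 := by
      rw [natCast_zsmul]
      exact Additive.toMul.injective (by rw [toMul_nsmul, hpow, toMul_zero])
    apply Subtype.ext
    show (m : ℤ) • (x : Additive (𝓞 F)ˣ) = 0
    exact hx0
  have h1 := rank_quotient_add_rank_of_isDomain (R := ℤ) (M := Additive (𝓞 F)ˣ)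
    (LinearMap.ker f)
  rw [hker, add_zero, (LinearMap.quotKerEquivOfSurjective f hsurj).rank_eq] at h1
  rw [← h1, ← Module.finrank_eq_rank, Units.rank_modTorsion]

private lemma aux_finrank_tensor_units :
    Module.finrank ℚ (ℚ ⊗[ℤ] Additive (𝓞 F)ˣ) = Units.rank F := by
  rw [aux_finrank_tensor, aux_rank_units, toNat_natCast]

end AuxUnits

/-- **Rank of the kernel of the norm map on units.** -/
theorem rank_ker_norm_units (K M : Type*) [Field K] [Field M]
    [NumberField K] [NumberField M] [Algebra K M] [FiniteDimensional K M] :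
    Group.FG (Units.map (RingOfIntegers.norm K (L := M))).ker ∧
    (Module.finrank ℚ
        (ℚ ⊗[ℤ] Additive ↥(Units.map (RingOfIntegers.norm K (L := M))).ker) : ℤ) =
      ((nrRealPlaces M + nrComplexPlaces M : ℕ) : ℤ) -
        ((nrRealPlaces K + nrComplexPlaces K : ℕ) : ℤ) ∧
    (Module.finrank ℚ
        (ℚ ⊗[ℤ] Additive ↥(Units.map (RingOfIntegers.norm K (L := M))).ker) : ℤ) =
      (Module.finrank ℚ (ℚ ⊗[ℤ] Additive (𝓞 M)ˣ) : ℤ) -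
        (Module.finrank ℚ (ℚ ⊗[ℤ] Additive (𝓞 K)ˣ) : ℤ) := by
  classical
  set N := Units.map (RingOfIntegers.norm K (L := M)) with hNdef
  set n := Module.finrank K M with hndef
  have hn : n ≠ 0 := Module.finrank_pos.ne'
  set f : Additive (𝓞 M)ˣ →ₗ[ℤ] Additive (𝓞 K)ˣ := (MonoidHom.toAdditive N).toIntLinearMap
    with hfdef
  set ι : Additive (𝓞 K)ˣ →ₗ[ℤ] Additive (𝓞 M)ˣ :=
    (MonoidHom.toAdditive (Units.map (algebraMap (𝓞 K) (𝓞 M)).toMonoidHom)).toIntLinearMap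
    with hιdef
  have key : ∀ u : (𝓞 K)ˣ, N (Units.map (algebraMap (𝓞 K) (𝓞 M)).toMonoidHom u) = u ^ n := by
    intro u
    apply Units.ext
    simp [hNdef, hndef, RingOfIntegers.norm_algebraMap]
  have hcomp : f ∘ₗ ι = ((n : ℤ) • LinearMap.id) := by
    apply LinearMap.ext
    intro x
    simp only [hfdef, hιdef, LinearMap.comp_apply, AddMonoidHom.coe_toIntLinearMap,
      MonoidHom.toAdditive_apply_apply, LinearMap.smul_apply, LinearMap.id_apply, toMul_ofMul]
    rw [key, ofMul_pow, ofMul_toMul, natCast_zsmul]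
  have hrange : Module.rank ℤ ↥(LinearMap.range f) = Module.rank ℤ (Additive (𝓞 K)ˣ) :=
    aux_rank_range f ι n hn hcomp
  have hmain := rank_quotient_add_rank_of_isDomain (R := ℤ) (M := Additive (𝓞 M)ˣ)
    (LinearMap.ker f)
  rw [aux_rank_units M] at hmain
  -- the kernel of `f` and the kernel of `N`
  have hmem : ∀ x : Additive (𝓞 M)ˣ, x ∈ LinearMap.ker f ↔ Additive.toMul x ∈ N.ker := by
    intro x
    rw [LinearMap.mem_ker, MonoidHom.mem_ker]
    simp [hfdef, MonoidHom.toAdditive_apply_apply]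
  let e : Additive ↥N.ker ≃+ ↥(LinearMap.ker f) :=
  { toFun := fun x => ⟨Additive.ofMul ((Additive.toMul x : ↥N.ker) : (𝓞 M)ˣ),
      (hmem _).mpr (Additive.toMul x).2⟩
    invFun := fun y => Additive.ofMul
      (⟨Additive.toMul (y : Additive (𝓞 M)ˣ), (hmem _).mp y.2⟩ : ↥N.ker)
    left_inv := fun _ => rfl
    right_inv := fun _ => rfl
    map_add' := fun _ _ => rfl }
  have hkerrank : Module.rank ℤ (Additive ↥N.ker) = Module.rank ℤ ↥(LinearMap.ker f) :=
    e.toIntLinearEquiv.rank_eq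
  -- finite generation
  have hnoeth : IsNoetherian ℤ (Additive (𝓞 M)ˣ) := inferInstance
  have hfin : Module.Finite ℤ ↥(LinearMap.ker f) :=
    Module.Finite.iff_fg.mpr (IsNoetherian.noetherian _)
  have hAddFG : AddGroup.FG (Additive ↥N.ker) := by
    have h1 : AddGroup.FG ↥(LinearMap.ker f) := Module.Finite.iff_addGroup_fg.mp hfin
    exact AddGroup.fg_of_surjective (f := e.symm.toAddMonoidHom) e.symm.surjective
  have hFG : Group.FG ↥N.ker := GroupFG.iff_add_fg.mpr hAddFG
  -- numerics
  have hcfin : Module.rank ℤ ↥(LinearMap.ker f) < Cardinal.aleph0 := by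
    have hle : Module.rank ℤ ↥(LinearMap.ker f) ≤ (NumberField.Units.rank M : Cardinal) := by
      rw [← hmain]; exact le_add_self
    exact lt_of_le_of_lt hle (Cardinal.nat_lt_aleph0 _)
  have hqfin : Module.rank ℤ (Additive (𝓞 M)ˣ ⧸ LinearMap.ker f) < Cardinal.aleph0 := by
    have hle : Module.rank ℤ (Additive (𝓞 M)ˣ ⧸ LinearMap.ker f) ≤
        (NumberField.Units.rank M : Cardinal) := by
      rw [← hmain]; exact le_self_add
    exact lt_of_le_of_lt hle (Cardinal.nat_lt_aleph0 _)
  have hqr : (Module.rank ℤ (Additive (𝓞 M)ˣ ⧸ LinearMap.ker f)).toNat =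
      NumberField.Units.rank K := by
    have h1 : Module.finrank ℤ (Additive (𝓞 M)ˣ ⧸ LinearMap.ker f) =
        Module.finrank ℤ ↥(LinearMap.range f) := f.quotKerEquivRange.finrank_eq
    show Module.finrank ℤ _ = _
    rw [h1, Module.finrank, hrange, aux_rank_units K, Cardinal.toNat_natCast]
  have hnat : NumberField.Units.rank K + (Module.rank ℤ ↥(LinearMap.ker f)).toNat =
      NumberField.Units.rank M := by
    have h2 := congrArg Cardinal.toNat hmain
    rwa [Cardinal.toNat_add hqfin hcfin, Cardinal.toNat_natCast, hqr] at h2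
  have hkerfinrank : Module.finrank ℚ (ℚ ⊗[ℤ] Additive ↥N.ker) =
      (Module.rank ℤ ↥(LinearMap.ker f)).toNat := by
    rw [aux_finrank_tensor, hkerrank]
  have hfinK := aux_finrank_tensor_units K
  have hfinM := aux_finrank_tensor_units M
  have hcardM : Fintype.card (InfinitePlace M) = nrRealPlaces M + nrComplexPlaces M :=
    card_eq_nrRealPlaces_add_nrComplexPlaces M
  have hcardK : Fintype.card (InfinitePlace K) = nrRealPlaces K + nrComplexPlaces K :=
    card_eq_nrRealPlaces_add_nrComplexPlaces K
  have hposM : 0 < Fintype.card (InfinitePlace M) := Fintype.card_pos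
  have hposK : 0 < Fintype.card (InfinitePlace K) := Fintype.card_pos
  have hrankM : NumberField.Units.rank M = Fintype.card (InfinitePlace M) - 1 := rfl
  have hrankK : NumberField.Units.rank K = Fintype.card (InfinitePlace K) - 1 := rfl
  refine ⟨hFG, ?_, ?_⟩
  · rw [hkerfinrank]
    omega
  · rw [hkerfinrank, hfinK, hfinM]
    omega
end
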